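/- arXiv:2003.11346 — 6 statements merged into one kernel-verified Lean document; each statement's English description precedes it below -/
import Mathlib

section
/- For every α > 0 and every finitely supported sequence x : ℕ₊ → ℂ, the quadratic form of K_α has the integral representation ∑_{n=1}^∞ ∑_{m=1}^∞ k_α(n,m) x(m) · conj(x(n)) = (1/2π) ∫_{−∞}^∞ |∑_{n=1}^∞ x(n) n^(−1/2−it)|² · (2α/(α² + t²)) dt. -/
open scoped BigOperators

/-- The Hardy kernel `k_α(n,m) = (nm)^(-1/2+α) / max(n,m)^(2α)` on the positive integers. -/
noncomputable def kmat (α : ℝ) (n m : ℕ+) : ℝ :=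
  ((n : ℝ) * (m : ℝ)) ^ (-(1/2 : ℝ) + α) / (max (n : ℝ) (m : ℝ)) ^ (2 * α)

/-!
Since `k_α(n,m) = (nm)^(-1/2) e^(-α|log n - log m|)`, the quadratic form is
`∑ₙ ∑ₘ e^(-α|λₙ - λₘ|) cₘ conj cₙ` with `cₙ = x(n) n^(-1/2)` and `λₙ = log n`. Fourier inversion for
the pair `e^(-α|b|) ↔ 2α/(α² + t²)` gives `∫ e^(ibt) 2α/(α² + t²) dt = 2π e^(-α|b|)`, and this is
what one obtains by expanding `|∑ₙ cₙ e^(-iλₙt)|²` into a double sum and integrating termwise.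
-/

open MeasureTheory Real Set
open Complex hiding log log_exp
open scoped ComplexConjugate FourierTransform

lemma integrable_exp_neg_mul_abs {c : ℝ} (hc : 0 < c) :
    Integrable fun t : ℝ => rexp (-(c * |t|)) := by
  have hleft : IntegrableOn (fun t : ℝ => rexp (-(c * |t|))) (Iic 0) :=
    (integrableOn_exp_mul_Iic hc 0).congr_fun (fun t ht => by
      rw [abs_of_nonpos (mem_Iic.mp ht)]; ring_nf) measurableSet_Iic
  have hright : IntegrableOn (fun t : ℝ => rexp (-(c * |t|))) (Ioi 0) :=
    (integrableOn_exp_mul_Ioi (neg_lt_zero.mpr hc) 0).congr_fun (fun t ht => by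
      rw [abs_of_pos (mem_Ioi.mp ht)]; ring_nf) measurableSet_Ioi
  rw [← integrableOn_univ, ← Iic_union_Ioi (a := (0 : ℝ))]
  exact hleft.union hright

lemma integrable_poisson {a : ℝ} (ha : 0 < a) :
    Integrable fun t : ℝ => 2 * a / (a ^ 2 + t ^ 2) := by
  refine ((ProbabilityTheory.integrable_cauchyPDFReal 0 (γ := a.toNNReal)).const_mul
    (2 * π)).congr (Filter.Eventually.of_forall fun t => ?_)
  dsimp only
  rw [ProbabilityTheory.cauchyPDFReal_def, Real.coe_toNNReal a ha.le, sub_zero]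
  field_simp
  ring

lemma fourier_exp_neg_two_pi_mul_abs {a : ℝ} (ha : 0 < a) (w : ℝ) :
    𝓕 (fun t : ℝ => (rexp (-(2 * π * a * |t|)) : ℂ)) w
      = ((2 * π)⁻¹ * (2 * a / (a ^ 2 + w ^ 2)) : ℝ) := by
  set f : ℝ → ℂ := fun t => cexp (↑(-2 * π * t * w) * I) • (rexp (-(2 * π * a * |t|)) : ℂ)
  have hleft : ∀ t ∈ Iic (0 : ℝ), f t = cexp (2 * π * (a - w * I) * t) := fun t ht => by
    simp only [f, abs_of_nonpos (mem_Iic.mp ht), smul_eq_mul, ofReal_exp, ← Complex.exp_add]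
    congr 1
    push_cast
    ring
  have hright : ∀ t ∈ Ioi (0 : ℝ), f t = cexp (-(2 * π * (a + w * I)) * t) := fun t ht => by
    simp only [f, abs_of_pos (mem_Ioi.mp ht), smul_eq_mul, ofReal_exp, ← Complex.exp_add]
    congr 1
    push_cast
    ring
  have hre₁ : 0 < (2 * π * (a - w * I)).re := by simp; positivity
  have hre₂ : (-(2 * π * (a + w * I))).re < 0 := by simp; positivity
  rw [fourier_real_eq_integral_exp_smul, ← intervalIntegral.integral_Iic_add_Ioi
    ((integrableOn_exp_mul_complex_Iic hre₁ 0).congr_fun (fun t ht => (hleft t ht).symm)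
      measurableSet_Iic)
    ((integrableOn_exp_mul_complex_Ioi hre₂ 0).congr_fun (fun t ht => (hright t ht).symm)
      measurableSet_Ioi),
    setIntegral_congr_fun measurableSet_Iic hleft, setIntegral_congr_fun measurableSet_Ioi hright,
    integral_exp_mul_complex_Iic hre₁, integral_exp_mul_complex_Ioi hre₂]
  have h₁ : (a : ℂ) - w * I ≠ 0 := fun h => by simpa [ha.ne'] using congrArg re h
  have h₂ : (a : ℂ) + w * I ≠ 0 := fun h => by simpa [ha.ne'] using congrArg re h
  have hπ : (π : ℂ) ≠ 0 := ofReal_ne_zero.mpr pi_ne_zero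
  have hd : ((a ^ 2 + w ^ 2 : ℝ) : ℂ) = (a - w * I) * (a + w * I) := by
    push_cast
    ring_nf
    rw [I_sq]
    ring
  rw [ofReal_mul, ofReal_div, hd]
  push_cast
  simp only [mul_zero, Complex.exp_zero]
  field_simp
  ring

/-- At the scale `2πa` the Fourier transform of `e^(-2πa|t|)` is `(2π)⁻¹` times the kernel in the
variable `w` itself, so inversion at `b / (2π)` needs no change of variables. -/
lemma integral_cexp_mul_poisson {a : ℝ} (ha : 0 < a) (b : ℝ) :
    ∫ t : ℝ, cexp (↑(b * t) * I) * ((2 * a / (a ^ 2 + t ^ 2) : ℝ) : ℂ)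
      = 2 * π * rexp (-(a * |b|)) := by
  set f : ℝ → ℂ := fun t => (rexp (-(2 * π * a * |t|)) : ℂ)
  have hf : Integrable f := (integrable_exp_neg_mul_abs (by positivity)).ofReal
  have hfourier : 𝓕 f = fun w => (((2 * π)⁻¹ * (2 * a / (a ^ 2 + w ^ 2)) : ℝ) : ℂ) :=
    funext (fourier_exp_neg_two_pi_mul_abs ha)
  have hinv := hf.fourierInv_fourier_eq (v := b / (2 * π))
    (hfourier ▸ ((integrable_poisson ha).const_mul _).ofReal) (by fun_prop)
  have hπ : π ≠ 0 := pi_ne_zero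
  rw [fourierInv_eq_fourier_neg, hfourier, fourier_real_eq_integral_exp_smul] at hinv
  simp only [smul_eq_mul] at hinv
  calc _ = 2 * π * ∫ w : ℝ, cexp (↑(-2 * π * w * -(b / (2 * π))) * I) *
        (((2 * π)⁻¹ * (2 * a / (a ^ 2 + w ^ 2)) : ℝ) : ℂ) := by
        rw [← integral_const_mul]
        congr 1 with w
        rw [show -2 * π * w * -(b / (2 * π)) = b * w by field_simp]
        push_cast
        field_simp
    _ = _ := by
      simp only [hinv, f, abs_div, abs_of_pos (by positivity : 0 < 2 * π)]
      field_simp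

lemma integrable_cexp_mul_poisson {a : ℝ} (ha : 0 < a) (b : ℝ) :
    Integrable fun t : ℝ => cexp (↑(b * t) * I) * ((2 * a / (a ^ 2 + t ^ 2) : ℝ) : ℂ) :=
  (integrable_poisson ha).ofReal.bdd_mul (c := 1) (by fun_prop)
    (Filter.Eventually.of_forall fun t => (norm_exp_ofReal_mul_I _).le)

lemma ofReal_norm_sum_sq {ι : Type*} (s : Finset ι) (c : ι → ℂ) (l : ι → ℝ) (t : ℝ) :
    ((‖∑ n ∈ s, c n * cexp (↑(-(l n * t)) * I)‖ ^ 2 : ℝ) : ℂ)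
      = ∑ n ∈ s, ∑ m ∈ s, c m * conj (c n) * cexp (↑((l n - l m) * t) * I) := by
  rw [ofReal_pow, ← conj_mul', map_sum, Finset.sum_mul_sum]
  refine Finset.sum_congr rfl fun n _ => Finset.sum_congr rfl fun m _ => ?_
  rw [map_mul, ← Complex.exp_conj, map_mul, conj_ofReal, conj_I]
  rw [mul_mul_mul_comm, ← Complex.exp_add]
  push_cast
  ring_nf

lemma integral_norm_sum_sq_mul_poisson {ι : Type*} (s : Finset ι) (c : ι → ℂ) (l : ι → ℝ)
    {a : ℝ} (ha : 0 < a) :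
    ((∫ t : ℝ, ‖∑ n ∈ s, c n * cexp (↑(-(l n * t)) * I)‖ ^ 2 * (2 * a / (a ^ 2 + t ^ 2)) : ℝ) : ℂ)
      = 2 * π * ∑ n ∈ s, ∑ m ∈ s, rexp (-(a * |l n - l m|)) * c m * conj (c n) := by
  have hint (n m : ι) := (integrable_cexp_mul_poisson ha (l n - l m)).const_mul (c m * conj (c n))
  have hexpand (t : ℝ) :
      ((‖∑ n ∈ s, c n * cexp (↑(-(l n * t)) * I)‖ ^ 2 * (2 * a / (a ^ 2 + t ^ 2)) : ℝ) : ℂ)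
        = ∑ n ∈ s, ∑ m ∈ s, c m * conj (c n)
          * (cexp (↑((l n - l m) * t) * I) * ((2 * a / (a ^ 2 + t ^ 2) : ℝ) : ℂ)) := by
    simp only [ofReal_mul (‖_‖ ^ 2), ofReal_norm_sum_sq, Finset.sum_mul, mul_assoc]
  rw [← integral_complex_ofReal, integral_congr_ae (Filter.Eventually.of_forall hexpand),
    integral_finsetSum _ fun n _ => integrable_finsetSum _ fun m _ => hint n m]
  simp_rw [integral_finsetSum _ fun m _ => hint _ m, integral_const_mul,
    integral_cexp_mul_poisson ha, Finset.mul_sum]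
  refine Finset.sum_congr rfl fun n _ => Finset.sum_congr rfl fun m _ => ?_
  ring

lemma mul_rpow_div_max_rpow {x y : ℝ} (hx : 0 < x) (hy : 0 < y) (α : ℝ) :
    (x * y) ^ (-(1/2 : ℝ) + α) / max x y ^ (2 * α)
      = x ^ (-(1/2 : ℝ)) * y ^ (-(1/2 : ℝ)) * rexp (-(α * |log x - log y|)) := by
  obtain ⟨u, rfl⟩ : ∃ u, rexp u = x := ⟨log x, exp_log hx⟩
  obtain ⟨v, rfl⟩ : ∃ v, rexp v = y := ⟨log y, exp_log hy⟩
  rw [← Real.exp_add, ← Monotone.map_max exp_monotone, log_exp, log_exp]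
  simp only [← Real.exp_mul, ← Real.exp_sub, ← Real.exp_add]
  rw [sup_eq_half_smul_add_add_abs_sub' ℝ, abs_sub_comm, smul_eq_mul]
  ring_nf

lemma kmat_eq (α : ℝ) (n m : ℕ+) :
    kmat α n m = (n : ℝ) ^ (-(1/2 : ℝ)) * (m : ℝ) ^ (-(1/2 : ℝ))
      * rexp (-(α * |log n - log m|)) :=
  mul_rpow_div_max_rpow (by positivity) (by positivity) α

lemma ofReal_cpow_sub_I_mul {x : ℝ} (hx : 0 < x) (σ t : ℝ) :
    (x : ℂ) ^ ((σ : ℂ) - I * t) = ((x ^ σ : ℝ) : ℂ) * cexp (↑(-(log x * t)) * I) := by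
  rw [cpow_def_of_ne_zero (ofReal_ne_zero.mpr hx.ne'), rpow_def_of_pos hx, ofReal_exp,
    ← Complex.exp_add, ← ofReal_log hx.le]
  congr 1
  push_cast
  ring

/-- Integral representation of the quadratic form of `K_α` on finitely supported sequences:
`∑ₙ ∑ₘ k_α(n,m) x(m) conj(x(n)) = (1/2π) ∫ |∑ₙ x(n) n^(-1/2-it)|² · 2α/(α²+t²) dt`. -/
theorem quadratic_form_integral_representation (α : ℝ) (hα : 0 < α)
    (x : ℕ+ → ℂ) (hx : (Function.support x).Finite) :
    ∑' n : ℕ+, ∑' m : ℕ+, (kmat α n m : ℂ) * x m * (starRingEnd ℂ) (x n)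
      = (((1 / (2 * Real.pi)) * ∫ t : ℝ,
          ‖∑' n : ℕ+, x n * ((n : ℂ) ^ (-(1/2 : ℂ) - Complex.I * (t : ℂ)))‖ ^ 2
            * (2 * α / (α ^ 2 + t ^ 2)) : ℝ) : ℂ) := by
  set s := hx.toFinset
  have hs (n : ℕ+) (hn : n ∉ s) : x n = 0 := by simpa [s] using hn
  have hdirichlet (t : ℝ) : ∑' n : ℕ+, x n * ((n : ℂ) ^ (-(1/2 : ℂ) - I * (t : ℂ)))
      = ∑ n ∈ s, (x n * ((n : ℝ) ^ (-(1/2 : ℝ)) : ℝ)) * cexp (↑(-(log n * t)) * I) := by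
    rw [tsum_eq_sum fun n hn => by rw [hs n hn, zero_mul]]
    refine Finset.sum_congr rfl fun n _ => ?_
    rw [mul_assoc, ← ofReal_cpow_sub_I_mul (by positivity)]
    push_cast
    rfl
  have hform : ∑' n : ℕ+, ∑' m : ℕ+, (kmat α n m : ℂ) * x m * conj (x n)
      = ∑ n ∈ s, ∑ m ∈ s, (kmat α n m : ℂ) * x m * conj (x n) := by
    rw [tsum_eq_sum fun n hn => by simp [hs n hn]]
    exact Finset.sum_congr rfl fun n _ => tsum_eq_sum fun m hm => by simp [hs m hm]
  simp_rw [hform, hdirichlet]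
  have hπ : ((1 / (2 * π) : ℝ) : ℂ) * (2 * π) = 1 := by
    push_cast
    field_simp [ofReal_ne_zero.mpr pi_ne_zero]
  rw [ofReal_mul, integral_norm_sum_sq_mul_poisson s _ (fun n : ℕ+ => log n) hα, ← mul_assoc, hπ,
    one_mul]
  refine Finset.sum_congr rfl fun n _ => Finset.sum_congr rfl fun m _ => ?_
  rw [kmat_eq, map_mul, conj_ofReal]
  push_cast
  ring
end

section
/- For every α > 0 and every finitely supported sequence x : ℕ₊ → ℂ, the sequence u = K_α x (given pointwise by u(n) = ∑_{m=1}^∞ k_α(n,m) x(m), an absolutely convergent series) satisfies a_α(n−1)u(n−1) + b_α(n)u(n) + a_α(n)u(n+1) = x(n) for every n ≥ 2, and b_α(1)u(1) + a_α(1)u(2) = x(1). In other words, J_α K_α x = x for all finitely supported x. -/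
open scoped BigOperators

/-- Off-diagonal Jacobi parameter `a_α`. -/
noncomputable def aJ (α x : ℝ) : ℝ :=
  (x ^ (α + 1/2) * (x + 1) ^ (α + 1/2)) / (x ^ (2 * α) - (x + 1) ^ (2 * α))

/-- Diagonal Jacobi parameter `b_α`. -/
noncomputable def bJ (α x : ℝ) : ℝ :=
  (x ^ (2 * α + 1) * ((x + 1) ^ (2 * α) - (x - 1) ^ (2 * α))) /
    (((x + 1) ^ (2 * α) - x ^ (2 * α)) * (x ^ (2 * α) - (x - 1) ^ (2 * α)))


/-!
With `g x = x ^ (α + 1/2)` and `w x = x ^ (2α)` the parameters are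
`a(x) = g x g (x+1) / (w x - w (x+1))` and `b(x) = g(x)² (1/(w x - w (x-1)) + 1/(w (x+1) - w x))`,
so `(J f)(x)` is `g x` times the drop across `x` of the slope of `g f` viewed as a function of `w`.
The kernel column satisfies `g · k(·, m) = min (w ·) (w m) / g m`, whose slope against `w` is `1`
before `m` and `0` after it, hence `J k(·, m) = δ_m`. The first row is the general one because
`a(0) = 0`. As `x` is finitely supported, all series are finite sums and `J` passes through `K`.
-/

section JacobiOfWeights

variable {𝕜 : Type*} [Field 𝕜] (g w : 𝕜 → 𝕜)

def jacobiA (x : 𝕜) : 𝕜 := g x * g (x + 1) / (w x - w (x + 1))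

def jacobiB (x : 𝕜) : 𝕜 :=
  g x ^ 2 * (w (x + 1) - w (x - 1)) / ((w (x + 1) - w x) * (w x - w (x - 1)))

variable {g w}

theorem jacobi_apply_eq_mul_sub_slope {f ψ : 𝕜 → 𝕜} {x : 𝕜}
    (hw₀ : w (x - 1) ≠ w x) (hw₁ : w x ≠ w (x + 1))
    (h₀ : g (x - 1) * f (x - 1) = ψ (w (x - 1))) (h₁ : g x * f x = ψ (w x))
    (h₂ : g (x + 1) * f (x + 1) = ψ (w (x + 1))) :
    jacobiA g w (x - 1) * f (x - 1) + jacobiB g w x * f x + jacobiA g w x * f (x + 1)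
      = g x * (slope ψ (w (x - 1)) (w x) - slope ψ (w x) (w (x + 1))) := by
  have d₀ : w (x - 1) - w x ≠ 0 := sub_ne_zero.mpr hw₀
  have d₁ : w x - w (x + 1) ≠ 0 := sub_ne_zero.mpr hw₁
  have d₀' : w x - w (x - 1) ≠ 0 := sub_ne_zero.mpr hw₀.symm
  have d₁' : w (x + 1) - w x ≠ 0 := sub_ne_zero.mpr hw₁.symm
  simp only [jacobiA, jacobiB, slope_def_field, sub_add_cancel, ← h₀, ← h₁, ← h₂]
  field_simp
  ring

end JacobiOfWeights

section SlopeMin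

variable {𝕜 : Type*} [Field 𝕜] [LinearOrder 𝕜] {s t W : 𝕜}

theorem slope_min_const_of_le (hst : s ≠ t) (hs : s ≤ W) (ht : t ≤ W) :
    slope (fun r ↦ min r W) s t = 1 := by
  rw [slope_def_field, min_eq_left hs, min_eq_left ht, div_self (sub_ne_zero.mpr hst.symm)]

theorem slope_min_const_of_ge (hs : W ≤ s) (ht : W ≤ t) :
    slope (fun r ↦ min r W) s t = 0 := by
  rw [slope_def_field, min_eq_right hs, min_eq_right ht, sub_self, zero_div]

end SlopeMin

section GreenFunction

variable {g w : ℝ → ℝ}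

theorem slope_min_sub_slope_min_eq_ite (hw : StrictMonoOn w (Set.Ici 0)) (n m : ℕ+) :
    slope (fun r ↦ min r (w m)) (w (n - 1)) (w n)
      - slope (fun r ↦ min r (w m)) (w n) (w (n + 1)) = if m = n then 1 else 0 := by
  have hn : (1 : ℝ) ≤ n := Nat.one_le_cast.mpr n.pos
  have hm : (0 : ℝ) < m := by exact_mod_cast m.pos
  have hmono : ∀ a b : ℝ, 0 ≤ a → a ≤ b → w a ≤ w b := fun a b ha hab ↦
    hw.monotoneOn (Set.mem_Ici.2 ha) (Set.mem_Ici.2 (ha.trans hab)) hab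
  have hw₀ : w (n - 1) < w n :=
    hw (Set.mem_Ici.2 (by linarith)) (Set.mem_Ici.2 (by linarith)) (by linarith)
  have hw₁ : w n < w (n + 1) :=
    hw (Set.mem_Ici.2 (by linarith)) (Set.mem_Ici.2 (by linarith)) (by linarith)
  rcases lt_trichotomy n m with hnm | rfl | hmn
  · have hnm' : (n : ℝ) + 1 ≤ m := by exact_mod_cast (hnm : (n : ℕ) + 1 ≤ m)
    rw [slope_min_const_of_le hw₀.ne (hmono _ _ (by linarith) (by linarith))
        (hmono _ _ (by linarith) (by linarith)),
      slope_min_const_of_le hw₁.ne (hmono _ _ (by linarith) (by linarith))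
        (hmono _ _ (by linarith) hnm'),
      sub_self, if_neg hnm.ne']
  · rw [slope_min_const_of_le hw₀.ne hw₀.le le_rfl, slope_min_const_of_ge le_rfl hw₁.le,
      sub_zero, if_pos rfl]
  · have hmn' : (m : ℝ) + 1 ≤ n := by exact_mod_cast (hmn : (m : ℕ) + 1 ≤ n)
    rw [slope_min_const_of_ge (hmono _ _ hm.le (by linarith)) (hmono _ _ hm.le (by linarith)),
      slope_min_const_of_ge (hmono _ _ hm.le (by linarith)) (hmono _ _ hm.le (by linarith)),
      sub_self, if_neg hmn.ne]

theorem jacobi_green_column {f : ℝ → ℝ} (hw : StrictMonoOn w (Set.Ici 0)) (n m : ℕ+)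
    (hgm : g m ≠ 0) (hf : ∀ t : ℝ, 0 ≤ t → g t * f t = min (w t) (w m) / g m) :
    jacobiA g w (n - 1) * f (n - 1) + jacobiB g w n * f n + jacobiA g w n * f (n + 1)
      = if m = n then 1 else 0 := by
  have hn : (1 : ℝ) ≤ n := Nat.one_le_cast.mpr n.pos
  have hw₀ : w (n - 1) < w n :=
    hw (Set.mem_Ici.2 (by linarith)) (Set.mem_Ici.2 (by linarith)) (by linarith)
  have hw₁ : w n < w (n + 1) :=
    hw (Set.mem_Ici.2 (by linarith)) (Set.mem_Ici.2 (by linarith)) (by linarith)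
  have hslope : ∀ s t, slope (fun r ↦ min r (w m) / g m) s t
      = slope (fun r ↦ min r (w m)) s t / g m := by
    intro s t; simp only [slope_def_field]; ring
  rw [jacobi_apply_eq_mul_sub_slope (ψ := fun r ↦ min r (w m) / g m) hw₀.ne hw₁.ne
      (hf _ (by linarith)) (hf _ (by linarith)) (hf _ (by linarith)), hslope, hslope, ← sub_div,
    slope_min_sub_slope_min_eq_ite hw]
  split_ifs with h
  · rw [← h, mul_one_div_cancel hgm]
  · rw [zero_div, mul_zero]

end GreenFunction

/-- `kmat` extended to real arguments, so that the rows `n ± 1` need no `ℕ+` arithmetic. -/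
noncomputable def hardyKernel (α x y : ℝ) : ℝ := (x * y) ^ (-(1/2 : ℝ) + α) / (max x y) ^ (2 * α)

section Hardy

variable {α : ℝ}

theorem rpow_two_mul_eq_rpow_mul_rpow {x : ℝ} (hx : 0 < x) (α : ℝ) :
    x ^ (2 * α) = x ^ (α + 1/2) * x ^ (-(1/2 : ℝ) + α) := by
  rw [← Real.rpow_add hx]; ring_nf

theorem rpow_mul_hardyKernel (hα : 0 < α) {x y : ℝ} (hx : 0 ≤ x) (hy : 0 < y) :
    x ^ (α + 1/2) * hardyKernel α x y = min (x ^ (2 * α)) (y ^ (2 * α)) / y ^ (α + 1/2) := by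
  rcases hx.eq_or_lt with rfl | hx
  · rw [Real.zero_rpow (by linarith), Real.zero_rpow (by linarith),
      min_eq_left (Real.rpow_nonneg hy.le _), zero_mul, zero_div]
  have hy' : y ^ (α + 1/2) ≠ 0 := (Real.rpow_pos_of_pos hy _).ne'
  rw [hardyKernel, Real.mul_rpow hx.le hy.le, eq_div_iff hy']
  rcases le_total x y with hxy | hyx
  · rw [max_eq_right hxy, min_eq_left (Real.rpow_le_rpow hx.le hxy (by linarith)),
      rpow_two_mul_eq_rpow_mul_rpow hy α, rpow_two_mul_eq_rpow_mul_rpow hx α]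
    field_simp
  · rw [max_eq_left hyx, min_eq_right (Real.rpow_le_rpow hy.le hyx (by linarith)),
      rpow_two_mul_eq_rpow_mul_rpow hy α, rpow_two_mul_eq_rpow_mul_rpow hx α]
    field_simp

theorem aJ_eq_jacobiA (α : ℝ) : aJ α = jacobiA (· ^ (α + 1/2)) (· ^ (2 * α)) := rfl

theorem bJ_eq_jacobiB (α : ℝ) {x : ℝ} (hx : 0 ≤ x) :
    bJ α x = jacobiB (· ^ (α + 1/2)) (· ^ (2 * α)) x := by
  rw [bJ, jacobiB, ← Real.rpow_natCast, ← Real.rpow_mul hx]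
  congr 3
  push_cast
  ring

theorem aJ_zero (hα : 0 < α) : aJ α 0 = 0 := by
  rw [aJ, Real.zero_rpow (by linarith), zero_mul, zero_div]

theorem jacobi_hardyKernel_column (hα : 0 < α) (n m : ℕ+) :
    aJ α ((n : ℝ) - 1) * hardyKernel α ((n : ℝ) - 1) m + bJ α n * hardyKernel α n m
      + aJ α n * hardyKernel α ((n : ℝ) + 1) m = if m = n then 1 else 0 := by
  have hm : (0 : ℝ) < m := by exact_mod_cast m.pos
  rw [aJ_eq_jacobiA, bJ_eq_jacobiB α (Nat.cast_nonneg _)]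
  exact jacobi_green_column (g := (· ^ (α + 1/2))) (f := fun t ↦ hardyKernel α t m)
    (Real.strictMonoOn_rpow_Ici_of_exponent_pos (by linarith)) n m
    (Real.rpow_pos_of_pos hm _).ne' fun t ht ↦ rpow_mul_hardyKernel hα ht hm

end Hardy

section Pairing

variable {ι R : Type*} [Semiring R] [TopologicalSpace R] [IsTopologicalSemiring R] [T2Space R]

theorem tsum_three_rows_mul_eq_of_eq_ite [DecidableEq ι] {x : ι → R}
    (hx : (Function.support x).Finite) {k₁ k₂ k₃ : ι → R} {c₁ c₂ c₃ : R} {n : ι}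
    (hrow : ∀ m, c₁ * k₁ m + c₂ * k₂ m + c₃ * k₃ m = if m = n then 1 else 0) :
    c₁ * ∑' m, k₁ m * x m + c₂ * ∑' m, k₂ m * x m + c₃ * ∑' m, k₃ m * x m = x n := by
  have hsum : ∀ k : ι → R, Summable fun m ↦ k m * x m := fun k ↦
    summable_of_hasFiniteSupport (hx.subset (Function.support_mul_subset_right _ _))
  rw [← (hsum k₁).tsum_mul_left, ← (hsum k₂).tsum_mul_left, ← (hsum k₃).tsum_mul_left,
    ← ((hsum k₁).mul_left c₁).tsum_add ((hsum k₂).mul_left c₂),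
    ← (((hsum k₁).mul_left c₁).add ((hsum k₂).mul_left c₂)).tsum_add ((hsum k₃).mul_left c₃)]
  simp_rw [← mul_assoc, ← add_mul, hrow, ite_mul, one_mul, zero_mul]
  exact tsum_ite_eq n x

end Pairing

theorem PNat.coe_sub_one_real {n : ℕ+} (hn : 2 ≤ n) : (((n - 1 : ℕ+) : ℕ) : ℝ) = n - 1 := by
  rw [PNat.sub_coe, if_pos (show (1 : ℕ+) < n from hn), PNat.one_coe,
    Nat.cast_sub n.pos, Nat.cast_one]

/-- For finitely supported `x`, the sequence `u = K_α x` satisfies `J_α u = x` pointwise: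
`a_α(n-1)u(n-1) + b_α(n)u(n) + a_α(n)u(n+1) = x(n)` for `n ≥ 2`, and
`b_α(1)u(1) + a_α(1)u(2) = x(1)`. -/
theorem jacobi_inverts_kernel (α : ℝ) (hα : 0 < α) (x : ℕ+ → ℂ)
    (hx : (Function.support x).Finite) (u : ℕ+ → ℂ)
    (hu : ∀ n : ℕ+, u n = ∑' m : ℕ+, (kmat α n m : ℂ) * x m) :
    (∀ n : ℕ+, 2 ≤ n →
      (aJ α ((n : ℝ) - 1) : ℂ) * u (n - 1) + (bJ α (n : ℝ) : ℂ) * u n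
          + (aJ α (n : ℝ) : ℂ) * u (n + 1) = x n) ∧
    (bJ α 1 : ℂ) * u 1 + (aJ α 1 : ℂ) * u 2 = x 1 := by
  have hu' : ∀ n : ℕ+, u n = ∑' m : ℕ+, (hardyKernel α n m : ℂ) * x m := hu
  have hJ : ∀ n : ℕ+,
      (aJ α ((n : ℝ) - 1) : ℂ) * ∑' m : ℕ+, (hardyKernel α ((n : ℝ) - 1) m : ℂ) * x m
      + (bJ α n : ℂ) * u n + (aJ α n : ℂ) * u (n + 1) = x n := by
    intro n
    rw [hu', hu', PNat.add_coe, PNat.one_coe, Nat.cast_add, Nat.cast_one]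
    refine tsum_three_rows_mul_eq_of_eq_ite hx fun m ↦ ?_
    have h := congrArg Complex.ofReal (jacobi_hardyKernel_column hα n m)
    rwa [apply_ite Complex.ofReal, Complex.ofReal_one, Complex.ofReal_zero, Complex.ofReal_add,
      Complex.ofReal_add, Complex.ofReal_mul, Complex.ofReal_mul, Complex.ofReal_mul] at h
  refine ⟨fun n hn ↦ ?_, ?_⟩
  · rw [hu' (n - 1), PNat.coe_sub_one_real hn]
    exact hJ n
  · have h₁ := hJ 1
    rwa [PNat.one_coe, Nat.cast_one, sub_self, aJ_zero hα, Complex.ofReal_zero, zero_mul,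
      zero_add] at h₁
end

section
/- Let h : (0,∞) → ℝ be a continuous function with h(1) = 1 and h(n) ≠ 0 for every positive integer n, and suppose that h(n/m) = h(max(n,m))/h(min(n,m)) for all positive integers n and m. Then there exists a real number α such that h(q) = (min(q, 1/q))^α for every positive rational number q. -/
/-!
Taking `n = a m` in the hypothesis shows that `h` is multiplicative on the positive integers,
hence on the rationals `≥ 1`, and by continuity and density on the reals `≥ 1`. There `h` has no
zeros (`h ⌈x⌉ = h x · h (⌈x⌉ / x) ≠ 0`), so it is positive (`h x = h (√x)²`), and
`t ↦ log h (eᵗ)` is a continuous additive function on `[0, ∞)`, hence linear: `h x = x ^ α`.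
Finally `h (n / m) = h (m / n)` transports this to the rationals below `1`.
-/

open Set Real

theorem eq_mul_of_map_add_of_nonneg {f : ℝ → ℝ} (hc : ContinuousOn f (Ici 0))
    (hadd : ∀ s t, 0 ≤ s → 0 ≤ t → f (s + t) = f s + f t) {t : ℝ} (ht : 0 ≤ t) :
    f t = t * f 1 := by
  have hadd₃ : ∀ x y z : ℝ, 0 ≤ x → 0 ≤ y → 0 ≤ z → f (x + y + z) = f x + f y + f z :=
    fun x y z hx hy hz => by rw [hadd _ _ (add_nonneg hx hy) hz, hadd x y hx hy]
  -- `t ↦ f t⁺ - f t⁻` is a continuous additive extension of `f` to all of `ℝ`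
  let F : ℝ →+ ℝ :=
    { toFun := fun t => f (max t 0) - f (max (-t) 0)
      map_zero' := by simp
      map_add' := fun s t => by
        have hsplit : max (s + t) 0 + max (-s) 0 + max (-t) 0
            = max s 0 + max t 0 + max (-(s + t)) 0 := by
          simp only [max_def]; split_ifs <;> linarith
        have := congrArg f hsplit
        rw [hadd₃ _ _ _ (le_max_right _ _) (le_max_right _ _) (le_max_right _ _),
          hadd₃ _ _ _ (le_max_right _ _) (le_max_right _ _) (le_max_right _ _)] at this
        linarith }
  have hF : ∀ t, 0 ≤ t → F t = f t := fun t ht => by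
    have h0 : f 0 = 0 := by simpa using hadd 0 0 le_rfl le_rfl
    simp [F, ht, h0]
  have hFc : Continuous F :=
    (hc.comp_continuous (continuous_id.max continuous_const) fun t => le_max_right t 0).sub
      (hc.comp_continuous (continuous_neg.max continuous_const) fun t => le_max_right (-t) 0)
  simpa [hF t ht, hF 1 zero_le_one] using map_real_smul F hFc t 1

theorem map_mul_of_one_le_of_ratCast {h : ℝ → ℝ} (hc : ContinuousOn h (Ici 1))
    (hmul : ∀ p q : ℚ, 1 ≤ p → 1 ≤ q → h (p * q) = h p * h q)
    {x y : ℝ} (hx : 1 ≤ x) (hy : 1 ≤ y) : h (x * y) = h x * h y := by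
  set S : Set ℝ := Ioi 1 ∩ range ((↑) : ℚ → ℝ)
  have hS₁ : S ⊆ Ici 1 := inter_subset_left.trans Ioi_subset_Ici_self
  have hS : Ici 1 ⊆ closure S := by
    rw [← closure_Ioi]
    exact closure_minimal (Rat.denseRange_cast.open_subset_closure_inter isOpen_Ioi)
      isClosed_closure
  have hmaps : MapsTo (fun p : ℝ × ℝ => p.1 * p.2) (Ici 1 ×ˢ Ici 1) (Ici 1) :=
    fun p hp => mem_Ici.mpr (one_le_mul_of_one_le_of_one_le hp.1 hp.2)
  have hEq : EqOn (fun p : ℝ × ℝ => h (p.1 * p.2)) (fun p => h p.1 * h p.2) (S ×ˢ S) := by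
    rintro ⟨-, -⟩ ⟨⟨hp, p, rfl⟩, ⟨hq, q, rfl⟩⟩
    exact hmul p q (by exact_mod_cast (show (1 : ℝ) < p from hp).le)
      (by exact_mod_cast (show (1 : ℝ) < q from hq).le)
  refine hEq.of_subset_closure (hc.comp (by fun_prop) hmaps)
    ((hc.comp continuousOn_fst fun p hp => hp.1).mul (hc.comp continuousOn_snd fun p hp => hp.2))
    (prod_subset_prod_iff.mpr (.inl ⟨hS₁, hS₁⟩))
    (by rw [closure_prod_eq]; exact prod_mono hS hS) (mk_mem_prod hx hy)

theorem pos_of_map_mul_of_one_le {h : ℝ → ℝ} (hnz : ∀ n : ℕ+, h n ≠ 0)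
    (hmul : ∀ x y, 1 ≤ x → 1 ≤ y → h (x * y) = h x * h y) {x : ℝ} (hx : 1 ≤ x) : 0 < h x := by
  have hx0 : 0 < x := by linarith
  have hne : h x ≠ 0 := by
    let n : ℕ+ := ⟨⌈x⌉₊, Nat.ceil_pos.mpr hx0⟩
    have hxn : x ≤ n := Nat.le_ceil x
    have hn := hnz n
    rw [← mul_div_cancel₀ (n : ℝ) hx0.ne', hmul _ _ hx ((one_le_div hx0).mpr hxn)] at hn
    exact left_ne_zero_of_mul hn
  have hsq : h x = h √x ^ 2 := by
    rw [sq, ← hmul _ _ (one_le_sqrt.mpr hx) (one_le_sqrt.mpr hx), mul_self_sqrt hx0.le]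
  rw [hsq] at hne ⊢
  positivity

theorem exists_eq_rpow_of_map_mul_of_one_le {h : ℝ → ℝ} (hc : ContinuousOn h (Ici 1))
    (hpos : ∀ x, 1 ≤ x → 0 < h x) (hmul : ∀ x y, 1 ≤ x → 1 ≤ y → h (x * y) = h x * h y) :
    ∃ α : ℝ, ∀ x, 1 ≤ x → h x = x ^ α := by
  set f : ℝ → ℝ := fun t => log (h (exp t))
  have hfc : ContinuousOn f (Ici 0) :=
    continuousOn_log.comp (hc.comp continuous_exp.continuousOn fun t => one_le_exp)
      fun t ht => (hpos _ (one_le_exp ht)).ne'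
  have hfadd : ∀ s t, 0 ≤ s → 0 ≤ t → f (s + t) = f s + f t := fun s t hs ht => by
    simp only [f, exp_add, hmul _ _ (one_le_exp hs) (one_le_exp ht)]
    exact log_mul (hpos _ (one_le_exp hs)).ne' (hpos _ (one_le_exp ht)).ne'
  refine ⟨f 1, fun x hx => ?_⟩
  have hx0 : 0 < x := by linarith
  have hlin := eq_mul_of_map_add_of_nonneg hfc hfadd (log_nonneg hx)
  simp only [f, exp_log hx0] at hlin
  rw [rpow_def_of_pos hx0, ← hlin, exp_log (hpos x hx)]

theorem eq_min_inv_rpow_of_map_inv {h : ℝ → ℝ} {α : ℝ} (hα : ∀ x, 1 ≤ x → h x = x ^ α)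
    {x : ℝ} (hx : 0 < x) (hinv : h x⁻¹ = h x) : h x = min x x⁻¹ ^ (-α) := by
  rcases le_total 1 x with h1x | hx1
  · rw [min_eq_right ((inv_le_one_of_one_le₀ h1x).trans h1x), rpow_neg (inv_nonneg.mpr hx.le),
      inv_rpow hx.le, inv_inv, hα x h1x]
  · have h1x : 1 ≤ x⁻¹ := (one_le_inv₀ hx).mpr hx1
    rw [min_eq_left (hx1.trans h1x), rpow_neg hx.le, ← inv_rpow hx.le, ← hinv, hα _ h1x]

theorem exists_pnat_div_eq (q : ℚ) (hq : 0 < q) : ∃ a b : ℕ+, (q : ℝ) = a / b := by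
  have hnum : 0 < q.num := Rat.num_pos.mpr hq
  refine ⟨⟨q.num.toNat, by omega⟩, ⟨q.den, q.pos⟩, ?_⟩
  rw [Rat.cast_def, PNat.mk_coe, PNat.mk_coe]
  congr 1
  exact_mod_cast (Int.toNat_of_nonneg hnum.le).symm

section RatioOfMaxMin

variable {h : ℝ → ℝ}

theorem map_pnat_div_of_le
    (hmul : ∀ n m : ℕ+, h ((n : ℝ) / m) = h (max (n : ℝ) m) / h (min (n : ℝ) m))
    {a b : ℕ+} (hab : (b : ℝ) ≤ a) : h (a / b) = h a / h b := by
  rw [hmul, max_eq_left hab, min_eq_right hab]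

theorem map_pnat_mul (hnz : ∀ n : ℕ+, h n ≠ 0)
    (hmul : ∀ n m : ℕ+, h ((n : ℝ) / m) = h (max (n : ℝ) m) / h (min (n : ℝ) m))
    (n m : ℕ+) : h (n * m) = h n * h m := by
  have hm : (0 : ℝ) < m := by exact_mod_cast m.pos
  have hle : (m : ℝ) ≤ n * m := le_mul_of_one_le_left hm.le (Nat.one_le_cast.mpr n.pos)
  have := map_pnat_div_of_le hmul (a := n * m) (b := m) (by exact_mod_cast hle)
  push_cast at this
  rw [mul_div_cancel_right₀ _ hm.ne', eq_div_iff (hnz m)] at this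
  exact this.symm

theorem map_ratCast_mul_of_one_le (hnz : ∀ n : ℕ+, h n ≠ 0)
    (hmul : ∀ n m : ℕ+, h ((n : ℝ) / m) = h (max (n : ℝ) m) / h (min (n : ℝ) m))
    {p q : ℚ} (hp : 1 ≤ p) (hq : 1 ≤ q) : h (p * q) = h p * h q := by
  obtain ⟨a, b, hab⟩ := exists_pnat_div_eq p (by linarith)
  obtain ⟨c, d, hcd⟩ := exists_pnat_div_eq q (by linarith)
  have hba : (b : ℝ) ≤ a := (one_le_div (by positivity)).mp (by rw [← hab]; exact_mod_cast hp)
  have hdc : (d : ℝ) ≤ c := (one_le_div (by positivity)).mp (by rw [← hcd]; exact_mod_cast hq)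
  have hprod : (a / b : ℝ) * (c / d) = ((a * c : ℕ+) : ℝ) / ((b * d : ℕ+) : ℝ) := by
    push_cast; exact div_mul_div_comm _ _ _ _
  have hle : ((b * d : ℕ+) : ℝ) ≤ ((a * c : ℕ+) : ℝ) := by
    push_cast; exact mul_le_mul hba hdc (by positivity) (by positivity)
  rw [hab, hcd, hprod, map_pnat_div_of_le hmul hle, map_pnat_div_of_le hmul hba,
    map_pnat_div_of_le hmul hdc]
  push_cast
  rw [map_pnat_mul hnz hmul, map_pnat_mul hnz hmul, div_mul_div_comm]

theorem map_inv_ratCast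
    (hmul : ∀ n m : ℕ+, h ((n : ℝ) / m) = h (max (n : ℝ) m) / h (min (n : ℝ) m))
    {q : ℚ} (hq : 0 < q) : h (q : ℝ)⁻¹ = h q := by
  obtain ⟨a, b, hab⟩ := exists_pnat_div_eq q hq
  rw [hab, inv_div, hmul, hmul, max_comm, min_comm]

end RatioOfMaxMin

theorem hardy_kernel_classification_general (h : ℝ → ℝ)
    (hc : ContinuousOn h (Set.Ioi (0 : ℝ)))
    (hnz : ∀ n : ℕ+, h (n : ℝ) ≠ 0)
    (hmul : ∀ n m : ℕ+,
      h ((n : ℝ) / (m : ℝ)) = h (max (n : ℝ) (m : ℝ)) / h (min (n : ℝ) (m : ℝ))) :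
    ∃ α : ℝ, ∀ q : ℚ, 0 < q → h (q : ℝ) = (min (q : ℝ) ((q : ℝ)⁻¹)) ^ α := by
  have hc₁ : ContinuousOn h (Ici 1) := hc.mono (Ici_subset_Ioi.mpr zero_lt_one)
  have hmulR : ∀ x y : ℝ, 1 ≤ x → 1 ≤ y → h (x * y) = h x * h y := fun _ _ =>
    map_mul_of_one_le_of_ratCast hc₁ fun _ _ => map_ratCast_mul_of_one_le hnz hmul
  obtain ⟨α, hα⟩ := exists_eq_rpow_of_map_mul_of_one_le hc₁
    (fun _ => pos_of_map_mul_of_one_le hnz hmulR) hmulR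
  exact ⟨-α, fun q hq =>
    eq_min_inv_rpow_of_map_inv hα (Rat.cast_pos.mpr hq) (map_inv_ratCast hmul hq)⟩

/-- Classification of continuous multiplicative-type functions: if `h : (0,∞) → ℝ` is
continuous, `h(1) = 1`, `h(n) ≠ 0` for every positive integer `n`, and
`h(n/m) = h(max(n,m))/h(min(n,m))` for all positive integers `n, m`, then there is a real
`α` with `h(q) = min(q, 1/q)^α` for every positive rational `q`. -/
theorem hardy_kernel_classification (h : ℝ → ℝ)
    (hc : ContinuousOn h (Set.Ioi (0 : ℝ)))
    (h1 : h 1 = 1)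
    (hnz : ∀ n : ℕ+, h (n : ℝ) ≠ 0)
    (hmul : ∀ n m : ℕ+,
      h ((n : ℝ) / (m : ℝ)) = h (max (n : ℝ) (m : ℝ)) / h (min (n : ℝ) (m : ℝ))) :
    ∃ α : ℝ, ∀ q : ℚ, 0 < q → h (q : ℝ) = (min (q : ℝ) ((q : ℝ)⁻¹)) ^ α :=
  hardy_kernel_classification_general h hc hnz hmul
end

section
/- For every α > 0 and every λ ∈ ℂ, the eigenspace { x ∈ ℓ²(ℕ₊, ℂ) : K_α x = λ·x } has dimension at most one (all eigenvalues of K_α are simple). -/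
open scoped BigOperators

/-- `K` realises the matrix `(k_α(n,m))` as a bounded operator on `ℓ²(ℕ₊, ℂ)`. -/
def IsKop (α : ℝ) (K : lp (fun _ : ℕ+ => ℂ) 2 →L[ℂ] lp (fun _ : ℕ+ => ℂ) 2) : Prop :=
  ∀ u : lp (fun _ : ℕ+ => ℂ) 2, ∀ n : ℕ+, K u n = ∑' m : ℕ+, (kmat α n m : ℂ) * u m

namespace HS

noncomputable def aa (α : ℝ) (m : ℕ+) : ℝ := (m:ℝ) ^ (-(1/2:ℝ) + α)
noncomputable def bb (α : ℝ) (m : ℕ+) : ℝ := (m:ℝ) ^ (-(1/2:ℝ) - α)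

lemma cast_pos (m : ℕ+) : (0:ℝ) < (m:ℝ) := by exact_mod_cast m.pos

lemma aa_pos (α : ℝ) (m : ℕ+) : 0 < aa α m := Real.rpow_pos_of_pos (cast_pos m) _
lemma bb_pos (α : ℝ) (m : ℕ+) : 0 < bb α m := Real.rpow_pos_of_pos (cast_pos m) _

lemma aa_ne (α : ℝ) (m : ℕ+) : (aa α m : ℂ) ≠ 0 := by
  exact_mod_cast Complex.ofReal_ne_zero.mpr (aa_pos α m).ne'

lemma kmat_left (α : ℝ) {n m : ℕ+} (h : m ≤ n) : kmat α n m = bb α n * aa α m := by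
  have hn := cast_pos n
  have hm := cast_pos m
  have hmn : (m:ℝ) ≤ (n:ℝ) := by exact_mod_cast h
  have he : (-(1/2:ℝ) + α) + -(2*α) = -(1/2:ℝ) - α := by ring
  rw [kmat, aa, bb, max_eq_left hmn, Real.mul_rpow hn.le hm.le, div_eq_mul_inv,
    ← Real.rpow_neg hn.le, mul_right_comm, ← Real.rpow_add hn, he]

lemma kmat_right (α : ℝ) {n m : ℕ+} (h : n ≤ m) : kmat α n m = aa α n * bb α m := by
  have hn := cast_pos n
  have hm := cast_pos m
  have hmn : (n:ℝ) ≤ (m:ℝ) := by exact_mod_cast h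
  have he : (-(1/2:ℝ) + α) + -(2*α) = -(1/2:ℝ) - α := by ring
  rw [kmat, aa, bb, max_eq_right hmn, Real.mul_rpow hn.le hm.le, div_eq_mul_inv,
    mul_assoc, ← Real.rpow_neg hm.le, ← Real.rpow_add hm, he]

lemma summable_bb_mul {α : ℝ} (hα : 0 < α) (x : lp (fun _ : ℕ+ => ℂ) 2) :
    Summable (fun m : ℕ+ => (bb α m : ℂ) * x m) := by
  have hx2 : Summable (fun m : ℕ+ => ‖x m‖ ^ (2:ℕ)) := by
    have h := lp.memℓp x
    rw [memℓp_gen_iff (by norm_num)] at h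
    have : ∀ m : ℕ+, ‖x m‖ ^ ((2:ENNReal).toReal) = ‖x m‖ ^ (2:ℕ) := by
      intro m
      rw [ENNReal.toReal_ofNat, ← Real.rpow_natCast]
      norm_num
    exact h.congr this
  have hb2 : Summable (fun m : ℕ+ => (bb α m) ^ (2:ℕ)) := by
    have hN : Summable (fun n : ℕ => (n:ℝ) ^ (-1 - 2*α)) :=
      Real.summable_nat_rpow.mpr (by linarith)
    have := hN.comp_injective (i := (PNat.val : ℕ+ → ℕ)) (fun p q h => PNat.coe_injective h)
    apply this.congr
    intro m
    show ((m:ℕ):ℝ) ^ (-1 - 2*α) = (bb α m) ^ (2:ℕ)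
    symm
    rw [bb, ← Real.rpow_natCast _ 2, ← Real.rpow_mul (cast_pos m).le]
    norm_num
    ring_nf
  apply Summable.of_norm_bounded (g := fun m => ((bb α m) ^ (2:ℕ) + ‖x m‖ ^ (2:ℕ)) / 2)
    ((hb2.add hx2).div_const 2)
  intro m
  have h1 : ‖(bb α m : ℂ) * x m‖ = bb α m * ‖x m‖ := by
    rw [norm_mul, Complex.norm_real, Real.norm_eq_abs, abs_of_pos (bb_pos α m)]
  rw [h1]
  nlinarith [sq_nonneg (bb α m - ‖x m‖), norm_nonneg (x m)]

variable {α : ℝ} (x : lp (fun _ : ℕ+ => ℂ) 2)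

noncomputable def Aq (n : ℕ+) : ℂ := ∑' m : ℕ+, if m ≤ n then (aa α m : ℂ) * x m else 0

noncomputable def Tq (n : ℕ+) : ℂ := ∑' m : ℕ+, if n < m then (bb α m : ℂ) * x m else 0

lemma summable_head (f : ℕ+ → ℂ) (n : ℕ+) :
    Summable (fun m => if m ≤ n then f m else 0) :=
  summable_of_ne_finset_zero (s := Finset.Iic n) (fun m hm => if_neg (by simpa using hm))

lemma summable_tail (hα : 0 < α) (n : ℕ+) :
    Summable (fun m : ℕ+ => if n < m then (bb α m : ℂ) * x m else 0) := by
  refine Summable.congr ((summable_bb_mul hα x).indicator {m : ℕ+ | n < m}) fun m => ?_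
  by_cases h : n < m
  · simp [Set.indicator_of_mem, h]
  · simp [Set.indicator_of_notMem, h]

lemma summable_single (f : ℕ+ → ℂ) (k : ℕ+) :
    Summable (fun m => if m = k then f m else 0) :=
  summable_of_ne_finset_zero (s := {k}) (fun m hm => if_neg (by simpa using hm))

lemma tsum_single (f : ℕ+ → ℂ) (k : ℕ+) :
    ∑' m : ℕ+, (if m = k then f m else 0) = f k := by
  rw [tsum_eq_single k (fun m hm => if_neg hm)]
  simp

lemma Aq_one : Aq (α := α) x 1 = (aa α 1 : ℂ) * x 1 := by
  rw [Aq, ← tsum_single (fun m => (aa α m : ℂ) * x m) 1]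
  exact tsum_congr fun m => by
    by_cases h : m = 1
    · simp [h]
    · rw [if_neg h, if_neg (fun hle => h (le_antisymm hle m.one_le))]

lemma Aq_step (n : ℕ+) :
    Aq (α := α) x (n+1) = Aq (α := α) x n + (aa α (n+1) : ℂ) * x (n+1) := by
  rw [Aq, Aq, ← tsum_single (fun m => (aa α m : ℂ) * x m) (n+1),
    ← Summable.tsum_add (summable_head (fun m => (aa α m : ℂ) * x m) n)
      (summable_single (fun m => (aa α m : ℂ) * x m) (n+1))]
  refine tsum_congr fun m => ?_
  by_cases h : m = n + 1
  · subst h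
    rw [if_pos le_rfl, if_neg (not_le.mpr (PNat.lt_add_one_iff.mpr le_rfl)), if_pos rfl, zero_add]
  · by_cases h2 : m ≤ n
    · rw [if_pos (h2.trans (le_of_lt (PNat.lt_add_one_iff.mpr le_rfl))), if_pos h2, if_neg h, add_zero]
    · have : ¬ (m ≤ n + 1) := by
        intro hle
        rcases lt_or_eq_of_le hle with hlt | he
        · exact h2 (PNat.lt_add_one_iff.mp hlt)
        · exact h he
      rw [if_neg this, if_neg h2, if_neg h, add_zero]

lemma Tq_step (hα : 0 < α) (n : ℕ+) :
    Tq (α := α) x n = Tq (α := α) x (n+1) + (bb α (n+1) : ℂ) * x (n+1) := by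
  rw [Tq, Tq, ← tsum_single (fun m => (bb α m : ℂ) * x m) (n+1),
    ← Summable.tsum_add (summable_tail x hα (n+1))
      (summable_single (fun m => (bb α m : ℂ) * x m) (n+1))]
  refine tsum_congr fun m => ?_
  by_cases h : m = n + 1
  · subst h
    rw [if_pos (PNat.lt_add_one_iff.mpr le_rfl), if_neg (lt_irrefl _), if_pos rfl, zero_add]
  · by_cases h2 : n + 1 < m
    · rw [if_pos ((PNat.lt_add_one_iff.mpr le_rfl).trans h2), if_pos h2, if_neg h, add_zero]
    · have : ¬ (n < m) := by
        intro hlt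
        rcases lt_or_eq_of_le (PNat.add_one_le_iff.mpr hlt) with hlt2 | he
        · exact h2 hlt2
        · exact h he.symm
      rw [if_neg this, if_neg h2, if_neg h, add_zero]

lemma eigen_eq (hα : 0 < α) {K : lp (fun _ : ℕ+ => ℂ) 2 →L[ℂ] lp (fun _ : ℕ+ => ℂ) 2}
    (hK : IsKop α K) {lam : ℂ} (hx : K x = lam • x) (n : ℕ+) :
    lam * x n = (bb α n : ℂ) * Aq (α := α) x n + (aa α n : ℂ) * Tq (α := α) x n := by
  have h1 : (K x : ∀ _ : ℕ+, ℂ) n = lam * x n := by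
    rw [hx, lp.coeFn_smul, Pi.smul_apply, smul_eq_mul]
  rw [← h1, hK x n]
  have hsplit : ∀ m : ℕ+, (kmat α n m : ℂ) * x m =
      (if m ≤ n then (bb α n : ℂ) * ((aa α m : ℂ) * x m) else 0) +
      (if n < m then (aa α n : ℂ) * ((bb α m : ℂ) * x m) else 0) := by
    intro m
    by_cases h : m ≤ n
    · rw [if_pos h, if_neg (not_lt.mpr h), add_zero, kmat_left α h]
      push_cast
      ring
    · rw [if_neg h, if_pos (not_le.mp h), zero_add, kmat_right α (le_of_lt (not_le.mp h))]
      push_cast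
      ring
  rw [tsum_congr hsplit,
    Summable.tsum_add (summable_head (fun m => (bb α n : ℂ) * ((aa α m : ℂ) * x m)) n)
      (by
        refine Summable.congr ((summable_tail x hα n).mul_left ((aa α n : ℂ))) fun m => ?_
        by_cases h : n < m
        · simp [h]
        · simp [h])]
  congr 1
  · rw [Aq, ← tsum_mul_left]
    exact tsum_congr fun m => by by_cases h : m ≤ n <;> simp [h]
  · rw [Tq, ← tsum_mul_left]
    exact tsum_congr fun m => by by_cases h : n < m <;> simp [h]

/-- the determinant is nonzero -/
lemma det_ne (hα : 0 < α) (n : ℕ+) :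
    (bb α n : ℂ) * (aa α (n+1) : ℂ) - (aa α n : ℂ) * (bb α (n+1) : ℂ) ≠ 0 := by
  have key : bb α n * aa α (n+1) - aa α n * bb α (n+1) ≠ 0 := by
    have hn := cast_pos n
    have hn1 := cast_pos (n+1)
    have e1 : aa α (n+1) = bb α (n+1) * ((n+1:ℕ+):ℝ) ^ (2*α) := by
      rw [aa, bb, ← Real.rpow_add hn1]; congr 1; ring
    have e2 : aa α n = bb α n * ((n:ℕ+):ℝ) ^ (2*α) := by
      rw [aa, bb, ← Real.rpow_add hn]; congr 1; ring
    rw [e1, e2]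
    have hlt : ((n:ℕ+):ℝ) ^ (2*α) < ((n+1:ℕ+):ℝ) ^ (2*α) := by
      apply Real.rpow_lt_rpow hn.le _ (by linarith)
      push_cast
      linarith
    have hb1 := bb_pos α n
    have hb2 := bb_pos α (n+1)
    have : bb α n * ((n+1:ℕ+):ℝ) ^ (2*α) - bb α n * ((n:ℕ+):ℝ) ^ (2*α) > 0 := by
      nlinarith [Real.rpow_pos_of_pos hn (2*α)]
    nlinarith [Real.rpow_pos_of_pos hn (2*α), Real.rpow_pos_of_pos hn1 (2*α)]
  intro h
  apply key
  have := congrArg Complex.re h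
  push_cast at this
  simpa using this


lemma key (hα : 0 < α) {K : lp (fun _ : ℕ+ => ℂ) 2 →L[ℂ] lp (fun _ : ℕ+ => ℂ) 2}
    (hK : IsKop α K) {lam : ℂ} (hx : K x = lam • x) (h1 : x 1 = 0) : x = 0 := by
  have hE := fun n => eigen_eq x hα hK hx n
  have hD : ∀ n : ℕ+, lam * x (n+1) =
      (bb α (n+1) : ℂ) * Aq (α := α) x n + (aa α (n+1) : ℂ) * Tq (α := α) x n := by
    intro n
    have h := hE (n+1)
    have hT := Tq_step x hα n
    rw [Aq_step] at h
    linear_combination h - (aa α (n+1) : ℂ) * hT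
  have hzero : ∀ n : ℕ+, x n = 0 := by
    by_cases hlam : lam = 0
    · subst hlam
      have hA : ∀ n : ℕ+, Aq (α := α) x n = 0 := by
        intro n
        have e1 := hE n
        have e2 := hD n
        rw [zero_mul] at e1 e2
        have hdet : ((bb α n : ℂ) * (aa α (n+1) : ℂ) - (aa α n : ℂ) * (bb α (n+1) : ℂ))
            * Aq (α := α) x n = 0 := by
          linear_combination (aa α n : ℂ) * e2 - (aa α (n+1) : ℂ) * e1
        rcases mul_eq_zero.mp hdet with h | h
        · exact absurd h (det_ne hα n)
        · exact h
      intro n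
      induction n using PNat.caseStrongInductionOn with
      | hz => exact h1
      | hi n _ =>
        have h := Aq_step (α := α) x n
        rw [hA n, hA (n+1), zero_add] at h
        exact (mul_eq_zero.mp h.symm).elim (fun h => absurd h (aa_ne α (n+1))) id
    · have main : ∀ n : ℕ+, x n = 0 ∧ Aq (α := α) x n = 0 := by
        intro n
        induction n using PNat.caseStrongInductionOn with
        | hz =>
          refine ⟨h1, ?_⟩
          rw [Aq_one, h1, mul_zero]
        | hi n IH =>
          obtain ⟨hxn, hAn⟩ := IH n le_rfl
          have hT : Tq (α := α) x n = 0 := by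
            have h := hE n
            rw [hxn, hAn, mul_zero, mul_zero, zero_add] at h
            exact (mul_eq_zero.mp h.symm).elim (fun h => absurd h (aa_ne α n)) id
          have hx1 : x (n+1) = 0 := by
            have h := hD n
            rw [hAn, hT, mul_zero, mul_zero, add_zero] at h
            exact (mul_eq_zero.mp h).elim (fun h => absurd h hlam) id
          refine ⟨hx1, ?_⟩
          rw [Aq_step, hAn, hx1, mul_zero, add_zero]
      exact fun n => (main n).1
  apply lp.ext
  funext n
  simpa using hzero n

end HS

/-- Every eigenspace of `K_α` has dimension at most one. -/
theorem eigenvalues_simple (α : ℝ) (hα : 0 < α)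
    (K : lp (fun _ : ℕ+ => ℂ) 2 →L[ℂ] lp (fun _ : ℕ+ => ℂ) 2) (hK : IsKop α K)
    (lam : ℂ) :
    Module.rank ℂ ↥(Module.End.eigenspace
      (↑K : lp (fun _ : ℕ+ => ℂ) 2 →ₗ[ℂ] lp (fun _ : ℕ+ => ℂ) 2) lam) ≤ 1 := by
  set V := Module.End.eigenspace
      (↑K : lp (fun _ : ℕ+ => ℂ) 2 →ₗ[ℂ] lp (fun _ : ℕ+ => ℂ) 2) lam with hV
  let f : V →ₗ[ℂ] ℂ :=
    { toFun := fun v => (v : lp (fun _ : ℕ+ => ℂ) 2) 1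
      map_add' := fun u v => by
        push_cast
        simp
      map_smul' := fun c v => by
        push_cast
        simp }
  have hinj : Function.Injective f := by
    rw [injective_iff_map_eq_zero]
    intro v hv
    have hmem : (↑K : lp (fun _ : ℕ+ => ℂ) 2 →ₗ[ℂ] lp (fun _ : ℕ+ => ℂ) 2) ↑v
        = lam • (↑v : lp (fun _ : ℕ+ => ℂ) 2) := Module.End.mem_eigenspace_iff.mp v.2
    have hKx : K (v : lp (fun _ : ℕ+ => ℂ) 2) = lam • (v : lp (fun _ : ℕ+ => ℂ) 2) := by
      simpa using hmem
    have hz := HS.key (α := α) (v : lp (fun _ : ℕ+ => ℂ) 2) hα hK hKx hv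
    exact Subtype.ext hz
  calc Module.rank ℂ V ≤ Module.rank ℂ ℂ := LinearMap.rank_le_of_injective f hinj
    _ = 1 := Module.rank_self ℂ
end

section
/- For every α > 0, the operator norm of K_α − K_∞ equals 2/α, where K_∞ is the diagonal operator on ℓ²(ℕ₊, ℂ) given by (K_∞ u)(n) = u(n)/n. -/
/-!
Since `kmat α n n = 1 / n`, the operator `K_α - K_∞` has the symmetric nonnegative matrix
`k_α(n,m)` for `m ≠ n` and `0` on the diagonal.

Upper bound: Schur test with the weight `m^(-1/2)`. In the row sum `∑_{m ≠ n} k_α(n,m) m^(-1/2)`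
the terms `m < n` give `n^(-α-1/2) ∑_{m<n} m^(α-1) ≤ n^(-1/2) / α` and the terms `m > n` give
`n^(α-1/2) ∑_{m>n} m^(-α-1) ≤ n^(-1/2) / α`, both by comparison with integrals.

Lower bound: the test vector `u_N = (m^(-1/2))_{m ≤ N}` has `‖u_N‖² = H_N`, the harmonic number,
while `⟪u_N, (K_α - K_∞) u_N⟫ = 2 ∑_{n ≤ N} n^(-α-1) ∑_{m<n} m^(α-1) ≥ (2/α) H_N - O(1)`.
As `H_N → ∞`, the norm is at least `2/α`.
-/

open scoped BigOperators

open Finset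
open scoped ENNReal NNReal

theorem PNat.cast_real_pos (n : ℕ+) : (0 : ℝ) < n := Nat.cast_pos.2 n.pos

theorem PNat.cast_succPNat (j : ℕ) : ((j.succPNat : ℕ+) : ℝ) = j + 1 := by
  simp

section Estimates

variable {α : ℝ}

theorem integral_rpow_sub_one (hα : 0 < α) (a b : ℝ) :
    ∫ x in a..b, x ^ (α - 1) = (b ^ α - a ^ α) / α := by
  rw [integral_rpow (Or.inl (by linarith)), sub_add_cancel]

theorem sum_range_rpow_sub_one_le (hα : 0 < α) (i : ℕ) :
    ∑ j ∈ range i, ((j : ℝ) + 1) ^ (α - 1) ≤ ((i : ℝ) + 1) ^ α / α := by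
  rw [add_comm (i : ℝ)]
  rcases le_total α 1 with hα1 | hα1
  · -- the comparison starts at `1`, so the first term `1 ^ (α - 1)` is split off
    have hanti : AntitoneOn (fun x : ℝ => x ^ (α - 1)) (Set.Icc 1 (1 + i)) :=
      fun x hx y _ hxy => Real.rpow_le_rpow_of_nonpos (by linarith [hx.1]) hxy (by linarith)
    have hint := hanti.sum_le_integral
    rw [integral_rpow_sub_one hα, Real.one_rpow] at hint
    calc ∑ j ∈ range i, ((j : ℝ) + 1) ^ (α - 1)
        ≤ ∑ j ∈ range (i + 1), ((j : ℝ) + 1) ^ (α - 1) :=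
          sum_le_sum_of_subset_of_nonneg (range_subset_range.2 i.le_succ)
            fun _ _ _ => by positivity
      _ = ∑ j ∈ range i, (1 + ((j + 1 : ℕ) : ℝ)) ^ (α - 1) + 1 := by
          rw [sum_range_succ']; push_cast; simp [add_comm]
      _ ≤ ((1 + i) ^ α - 1) / α + 1 := by linarith
      _ ≤ (1 + (i : ℝ)) ^ α / α := by
          rw [div_add_one hα.ne', div_le_div_iff_of_pos_right hα]; linarith
  · have hmono : MonotoneOn (fun x : ℝ => x ^ (α - 1)) (Set.Icc 1 (1 + i)) :=
      fun x hx y _ hxy => Real.rpow_le_rpow (by linarith [hx.1]) hxy (by linarith)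
    have hint := hmono.sum_le_integral
    rw [integral_rpow_sub_one hα, Real.one_rpow] at hint
    calc ∑ j ∈ range i, ((j : ℝ) + 1) ^ (α - 1)
        = ∑ j ∈ range i, (1 + (j : ℝ)) ^ (α - 1) := by simp only [add_comm]
      _ ≤ ((1 + i) ^ α - 1) / α := hint
      _ ≤ (1 + (i : ℝ)) ^ α / α := by gcongr; linarith

theorem le_sum_range_rpow_sub_one (hα : 0 < α) (i : ℕ) :
    (((i : ℝ) + 1) ^ α - 1) / α - ((i : ℝ) + 1) ^ (α - 1) ≤
      ∑ j ∈ range i, ((j : ℝ) + 1) ^ (α - 1) := by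
  rcases le_total α 1 with hα1 | hα1
  · have hanti : AntitoneOn (fun x : ℝ => x ^ (α - 1)) (Set.Icc 1 (1 + i)) :=
      fun x hx y _ hxy => Real.rpow_le_rpow_of_nonpos (by linarith [hx.1]) hxy (by linarith)
    have hint := hanti.integral_le_sum
    rw [integral_rpow_sub_one hα, Real.one_rpow] at hint
    have : (0 : ℝ) ≤ ((i : ℝ) + 1) ^ (α - 1) := by positivity
    simp only [add_comm (1 : ℝ)] at hint
    linarith
  · have hmono : MonotoneOn (fun x : ℝ => x ^ (α - 1)) (Set.Icc 0 (0 + (i + 1 : ℕ))) :=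
      fun x hx y _ hxy => Real.rpow_le_rpow hx.1 hxy (by linarith)
    have hint := hmono.integral_le_sum
    rw [integral_rpow_sub_one hα, Real.zero_rpow hα.ne', sum_range_succ] at hint
    push_cast at hint
    simp only [zero_add, sub_zero] at hint
    have : (0 : ℝ) ≤ 1 / α := by positivity
    rw [sub_div]
    linarith

theorem tsum_rpow_neg_add_one_le (hα : 0 < α) {n : ℕ} (hn : 0 < n) :
    ∑' j : ℕ, ((j : ℝ) + n + 1) ^ (-(α + 1)) ≤ (n : ℝ) ^ (-α) / α := by
  have hn' : (0 : ℝ) < n := by exact_mod_cast hn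
  have hanti : AntitoneOn (fun x : ℝ => x ^ (-(α + 1))) (Set.Ici (n : ℝ)) :=
    fun x hx y _ hxy => Real.rpow_le_rpow_of_nonpos (hn'.trans_le hx) hxy (by linarith)
  have key := hanti.tsum_comp_add_le_integral n (integrableOn_Ioi_rpow_of_lt (by linarith) hn')
    fun t ht => Real.rpow_nonneg (hn'.trans ht).le _
  rw [integral_Ioi_rpow_of_lt (by linarith) hn', show -(α + 1) + 1 = -α by ring,
    neg_div_neg_eq] at key
  exact_mod_cast key

theorem tsum_ofReal_rpow_le (hα : 0 < α) {n : ℕ} (hn : 0 < n) :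
    ∑' j : ℕ, ENNReal.ofReal (((j : ℝ) + n + 1) ^ (-(α + 1))) ≤
      ENNReal.ofReal ((n : ℝ) ^ (-α) / α) := by
  have hsum : Summable fun j : ℕ => ((j : ℝ) + n + 1) ^ (-(α + 1)) :=
    ((summable_nat_add_iff (n + 1)).2
      (Real.summable_nat_rpow.2 (by linarith : -(α + 1) < -1))).congr
      fun j => by push_cast; ring_nf
  rw [← ENNReal.ofReal_tsum_of_nonneg (fun j => by positivity) hsum]
  exact ENNReal.ofReal_le_ofReal (tsum_rpow_neg_add_one_le hα hn)

end Estimates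

theorem Finset.sum_range_sum_range_eq_two_nsmul {M : Type*} [AddCommMonoid M] (F : ℕ → ℕ → M)
    (hF : ∀ i j, F i j = F j i) (hdiag : ∀ i, F i i = 0) (N : ℕ) :
    ∑ i ∈ range N, ∑ j ∈ range N, F i j = 2 • ∑ i ∈ range N, ∑ j ∈ range i, F i j := by
  induction N with
  | zero => simp
  | succ N ih =>
    simp only [sum_range_succ, sum_add_distrib, ih, hdiag, add_zero, smul_add, two_smul]
    rw [sum_congr rfl fun i _ => hF i N]
    abel

theorem Filter.Tendsto.le_of_forall_mul_sub_le_mul {ι : Type*} {l : Filter ι} [l.NeBot]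
    {a b D : ℝ} {H : ι → ℝ} (hH : Filter.Tendsto H l Filter.atTop)
    (h : ∀ N, a * H N - D ≤ b * H N) :
    a ≤ b := by
  by_contra! hba
  obtain ⟨N, hN⟩ := ((hH.const_mul_atTop (sub_pos.2 hba)).eventually_gt_atTop D).exists
  have := h N
  rw [sub_mul] at hN
  linarith

namespace ENNReal

variable {ι : Type*}

theorem two_mul_mul_le_add_sq (a b : ℝ≥0∞) : 2 * a * b ≤ a ^ 2 + b ^ 2 := by
  rcases eq_or_ne a ∞ with rfl | ha
  · simp [top_pow two_ne_zero]
  rcases eq_or_ne b ∞ with rfl | hb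
  · simp [top_pow two_ne_zero]
  lift a to ℝ≥0 using ha
  lift b to ℝ≥0 using hb
  exact_mod_cast two_mul_le_add_sq a b

theorem tsum_mul_tsum (f g : ι → ℝ≥0∞) :
    (∑' i, f i) * ∑' j, g j = ∑' i, ∑' j, f i * g j := by
  simp only [ENNReal.tsum_mul_left, ENNReal.tsum_mul_right]

theorem sq_tsum_mul_le (a U w : ι → ℝ≥0∞) (hw₀ : ∀ i, w i ≠ 0) (hw : ∀ i, w i ≠ ∞) :
    (∑' i, a i * U i) ^ 2 ≤ (∑' i, a i * w i) * ∑' i, a i * (U i ^ 2 / w i) := by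
  have hU : ∀ i, U i = U i / w i * w i := fun i => (ENNReal.div_mul_cancel (hw₀ i) (hw i)).symm
  have hV : ∀ i, U i ^ 2 / w i = (U i / w i) ^ 2 * w i := fun i => by
    conv_lhs => rw [hU i]
    rw [mul_pow, pow_two (w i), ← mul_assoc, ENNReal.mul_div_cancel_right (hw₀ i) (hw i)]
  -- AM-GM for `U i / w i` and `U j / w j`, summed over `i, j` and symmetrised
  have key : ∀ i j, 2 * (a i * U i * (a j * U j)) ≤
      a i * w i * (a j * (U j ^ 2 / w j)) + a j * w j * (a i * (U i ^ 2 / w i)) := by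
    intro i j
    calc 2 * (a i * U i * (a j * U j))
        = a i * w i * (a j * w j) * (2 * (U i / w i) * (U j / w j)) := by
          rw [hU i, hU j]
          simp only [ENNReal.mul_div_cancel_right (hw₀ _) (hw _)]
          ring
      _ ≤ a i * w i * (a j * w j) * ((U i / w i) ^ 2 + (U j / w j) ^ 2) := by
          gcongr; exact two_mul_mul_le_add_sq _ _
      _ = _ := by rw [hV, hV]; ring
  rw [← ENNReal.mul_le_mul_iff_right two_ne_zero ofNat_ne_top, pow_two, tsum_mul_tsum,
    ← ENNReal.tsum_mul_left]
  calc ∑' i, 2 * ∑' j, a i * U i * (a j * U j)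
      = ∑' i, ∑' j, 2 * (a i * U i * (a j * U j)) := by simp only [ENNReal.tsum_mul_left]
    _ ≤ ∑' i, ∑' j, (a i * w i * (a j * (U j ^ 2 / w j)) +
          a j * w j * (a i * (U i ^ 2 / w i))) :=
        ENNReal.tsum_le_tsum fun i => ENNReal.tsum_le_tsum fun j => key i j
    _ = 2 * ((∑' i, a i * w i) * ∑' i, a i * (U i ^ 2 / w i)) := by
        simp only [ENNReal.tsum_add]
        rw [ENNReal.tsum_comm (f := fun i j => a j * w j * (a i * (U i ^ 2 / w i))),
          ← tsum_mul_tsum, two_mul]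

theorem tsum_sq_tsum_mul_le_of_schur (A : ι → ι → ℝ≥0∞) (w : ι → ℝ≥0∞) (C : ℝ≥0∞)
    (hw₀ : ∀ i, w i ≠ 0) (hw : ∀ i, w i ≠ ∞) (hsymm : ∀ i j, A i j = A j i)
    (hrow : ∀ i, ∑' j, A i j * w j ≤ C * w i) (U : ι → ℝ≥0∞) :
    ∑' i, (∑' j, A i j * U j) ^ 2 ≤ C ^ 2 * ∑' j, U j ^ 2 :=
  calc ∑' i, (∑' j, A i j * U j) ^ 2
      ≤ ∑' i, C * w i * ∑' j, A i j * (U j ^ 2 / w j) :=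
        ENNReal.tsum_le_tsum fun i => (sq_tsum_mul_le _ _ _ hw₀ hw).trans (by gcongr; exact hrow i)
    _ = C * ∑' j, U j ^ 2 / w j * ∑' i, A j i * w i := by
        simp only [mul_assoc, ← ENNReal.tsum_mul_left]
        rw [ENNReal.tsum_comm]
        congr 1; ext j; congr 1; ext i
        rw [hsymm]; ring
    _ ≤ C * ∑' j, U j ^ 2 / w j * (C * w j) := by gcongr with j; exact hrow j
    _ = C ^ 2 * ∑' j, U j ^ 2 := by
        rw [pow_two, mul_assoc, ← ENNReal.tsum_mul_left (a := C) (f := fun j => U j ^ 2)]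
        congr 1
        refine tsum_congr fun j => ?_
        rw [mul_left_comm, mul_comm, ENNReal.div_mul_cancel (hw₀ j) (hw j), mul_comm]

end ENNReal

namespace lp

variable {ι : Type*} {E F : ι → Type*} [∀ i, NormedAddCommGroup (E i)]
  [∀ i, NormedAddCommGroup (F i)]

theorem ofReal_norm_sq_eq_tsum (f : lp E 2) :
    ENNReal.ofReal (‖f‖ ^ 2) = ∑' i, ‖f i‖ₑ ^ 2 := by
  have h2 : (2 : ℝ≥0∞).toReal = 2 := by norm_num
  have hsum := (lp.memℓp f).summable (by norm_num : 0 < (2 : ℝ≥0∞).toReal)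
  have hnorm := lp.norm_rpow_eq_tsum (by norm_num : 0 < (2 : ℝ≥0∞).toReal) f
  simp only [h2, Real.rpow_two] at hsum hnorm
  rw [hnorm, ENNReal.ofReal_tsum_of_nonneg (fun _ => by positivity) hsum]
  simp only [ENNReal.ofReal_pow (norm_nonneg _), ofReal_norm]

theorem norm_le_of_schur (A : ι → ι → ℝ≥0∞) (w : ι → ℝ≥0∞) {C : ℝ} (hC : 0 ≤ C)
    (hw₀ : ∀ i, w i ≠ 0) (hw : ∀ i, w i ≠ ∞) (hsymm : ∀ i j, A i j = A j i)
    (hrow : ∀ i, ∑' j, A i j * w j ≤ ENNReal.ofReal C * w i) {u : lp E 2} {f : lp F 2}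
    (hf : ∀ i, ‖f i‖ₑ ≤ ∑' j, A i j * ‖u j‖ₑ) : ‖f‖ ≤ C * ‖u‖ := by
  have key : ENNReal.ofReal (‖f‖ ^ 2) ≤ ENNReal.ofReal ((C * ‖u‖) ^ 2) :=
    calc ENNReal.ofReal (‖f‖ ^ 2) = ∑' i, ‖f i‖ₑ ^ 2 := ofReal_norm_sq_eq_tsum f
      _ ≤ ∑' i, (∑' j, A i j * ‖u j‖ₑ) ^ 2 := ENNReal.tsum_le_tsum fun i => by gcongr; exact hf i
      _ ≤ ENNReal.ofReal C ^ 2 * ∑' j, ‖u j‖ₑ ^ 2 :=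
          ENNReal.tsum_sq_tsum_mul_le_of_schur A w _ hw₀ hw hsymm hrow _
      _ = ENNReal.ofReal ((C * ‖u‖) ^ 2) := by
          rw [← ofReal_norm_sq_eq_tsum, ← ENNReal.ofReal_pow hC, ← ENNReal.ofReal_mul (by positivity),
            mul_pow]
  rw [ENNReal.ofReal_le_ofReal_iff (by positivity)] at key
  exact (pow_le_pow_iff_left₀ (norm_nonneg _) (by positivity) two_ne_zero).1 key

theorem sum_sum_mul_le_opNorm_mul [DecidableEq ι]
    (T : lp (fun _ : ι => ℂ) 2 →L[ℂ] lp (fun _ : ι => ℂ) 2) (a : ι → ι → ℝ)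
    (hT : ∀ i j, T (lp.single 2 j 1) i = a i j) (s : Finset ι) (c : ι → ℝ) :
    ∑ i ∈ s, ∑ j ∈ s, c i * a i j * c j ≤ ‖T‖ * ∑ i ∈ s, c i ^ 2 := by
  set u : lp (fun _ : ι => ℂ) 2 := ∑ j ∈ s, lp.single 2 j (c j : ℂ)
  have hTu : ∀ i, T u i = ∑ j ∈ s, a i j * c j := fun i => by
    simp only [u, map_sum]
    rw [lp.coeFn_sum, Finset.sum_apply]
    push_cast
    refine Finset.sum_congr rfl fun j _ => ?_
    have hsingle : lp.single (E := fun _ : ι => ℂ) 2 j (c j : ℂ) =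
        (c j : ℂ) • lp.single 2 j 1 := by
      rw [← lp.single_smul, smul_eq_mul, mul_one]
    rw [hsingle, map_smul, lp.coeFn_smul, Pi.smul_apply, hT, smul_eq_mul, mul_comm]
  have hinner : inner ℂ u (T u) = ((∑ i ∈ s, ∑ j ∈ s, c i * a i j * c j : ℝ) : ℂ) := by
    simp only [u, sum_inner, lp.inner_single_left, hTu, RCLike.inner_apply, Complex.conj_ofReal]
    push_cast
    simp only [Finset.sum_mul]
    exact Finset.sum_congr rfl fun i _ => Finset.sum_congr rfl fun j _ => by ring
  have hnorm : ‖u‖ ^ 2 = ∑ i ∈ s, c i ^ 2 := by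
    have := lp.norm_sum_single (E := fun _ : ι => ℂ) (by norm_num : 0 < (2 : ℝ≥0∞).toReal)
      (fun j => (c j : ℂ)) s
    simpa [Real.rpow_two] using this
  calc ∑ i ∈ s, ∑ j ∈ s, c i * a i j * c j ≤ ‖inner ℂ u (T u)‖ := by
        rw [hinner, Complex.norm_real]; exact le_abs_self _
    _ ≤ ‖u‖ * ‖T u‖ := norm_inner_le_norm _ _
    _ ≤ ‖u‖ * (‖T‖ * ‖u‖) := by gcongr; exact T.le_opNorm u
    _ = ‖T‖ * ∑ i ∈ s, c i ^ 2 := by rw [← hnorm]; ring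

end lp

section Kernel

variable {α : ℝ}

theorem kmat_nonneg (α : ℝ) (n m : ℕ+) : 0 ≤ kmat α n m := by
  unfold kmat; positivity

theorem kmat_comm (α : ℝ) (n m : ℕ+) : kmat α n m = kmat α m n := by
  rw [kmat, kmat, mul_comm, max_comm]

theorem kmat_of_le (α : ℝ) {n m : ℕ+} (h : m ≤ n) :
    kmat α n m = (m : ℝ) ^ (α - 1/2) * (n : ℝ) ^ (-(α + 1/2)) := by
  have hn := n.cast_real_pos
  rw [kmat, max_eq_left (by exact_mod_cast h), Real.mul_rpow hn.le m.cast_real_pos.le,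
    mul_comm, mul_div_assoc, ← Real.rpow_sub hn]
  ring_nf

theorem kmat_self (α : ℝ) (n : ℕ+) : kmat α n n = (n : ℝ)⁻¹ := by
  rw [kmat_of_le α le_rfl, ← Real.rpow_add n.cast_real_pos, ← Real.rpow_neg_one]
  ring_nf

theorem kmat_le (hα : 0 < α) (n m : ℕ+) :
    kmat α n m ≤ (n : ℝ) ^ (α - 1/2) * (m : ℝ) ^ (-(α + 1/2)) := by
  have hm := m.cast_real_pos
  calc kmat α n m ≤ ((n : ℝ) * m) ^ (-(1/2 : ℝ) + α) / (m : ℝ) ^ (2 * α) := by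
        unfold kmat
        gcongr
        exact le_max_right _ _
    _ = _ := by
        rw [Real.mul_rpow n.cast_real_pos.le hm.le, mul_div_assoc, ← Real.rpow_sub hm]
        ring_nf

theorem kmat_mul_rpow_of_lt (α : ℝ) {n m : ℕ+} (h : m < n) :
    kmat α n m * (m : ℝ) ^ (-(1/2 : ℝ)) = (n : ℝ) ^ (-(α + 1/2)) * (m : ℝ) ^ (α - 1) := by
  rw [kmat_of_le α h.le, mul_right_comm, ← Real.rpow_add m.cast_real_pos, mul_comm]
  ring_nf

theorem kmat_mul_rpow_of_gt (α : ℝ) {n m : ℕ+} (h : n < m) :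
    kmat α n m * (m : ℝ) ^ (-(1/2 : ℝ)) = (n : ℝ) ^ (α - 1/2) * (m : ℝ) ^ (-(α + 1)) := by
  rw [kmat_comm, kmat_of_le α h.le, mul_assoc, ← Real.rpow_add m.cast_real_pos]
  ring_nf

noncomputable def kmatOffDiag (α : ℝ) (n m : ℕ+) : ℝ := if m = n then 0 else kmat α n m

theorem kmatOffDiag_nonneg (α : ℝ) (n m : ℕ+) : 0 ≤ kmatOffDiag α n m := by
  unfold kmatOffDiag; split_ifs
  exacts [le_rfl, kmat_nonneg α n m]

theorem kmatOffDiag_comm (α : ℝ) (n m : ℕ+) : kmatOffDiag α n m = kmatOffDiag α m n := by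
  simp only [kmatOffDiag, eq_comm (a := m), kmat_comm α n m]

theorem kmatOffDiag_self (α : ℝ) (n : ℕ+) : kmatOffDiag α n n = 0 := if_pos rfl

theorem kmatOffDiag_of_ne (α : ℝ) {n m : ℕ+} (h : m ≠ n) : kmatOffDiag α n m = kmat α n m :=
  if_neg h

theorem sum_range_kmatOffDiag_mul_rpow_le (hα : 0 < α) (i : ℕ) :
    ∑ j ∈ range i, kmatOffDiag α i.succPNat j.succPNat * ((j.succPNat : ℕ+) : ℝ) ^ (-(1/2 : ℝ)) ≤
      ((i : ℝ) + 1) ^ (-(1/2 : ℝ)) / α := by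
  have hterm : ∀ j ∈ range i, kmatOffDiag α i.succPNat j.succPNat *
      ((j.succPNat : ℕ+) : ℝ) ^ (-(1/2 : ℝ)) =
      ((i : ℝ) + 1) ^ (-(α + 1/2)) * ((j : ℝ) + 1) ^ (α - 1) := by
    intro j hj
    have hlt : j.succPNat < i.succPNat := Nat.succPNat_lt_succPNat.2 (mem_range.1 hj)
    rw [kmatOffDiag_of_ne α hlt.ne, kmat_mul_rpow_of_lt α hlt, PNat.cast_succPNat,
      PNat.cast_succPNat]
  rw [sum_congr rfl hterm, ← mul_sum]
  refine (mul_le_mul_of_nonneg_left (sum_range_rpow_sub_one_le hα i) (by positivity)).trans_eq ?_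
  rw [mul_div_assoc', ← Real.rpow_add (by positivity)]
  ring_nf

theorem tsum_ofReal_kmatOffDiag_mul_rpow_le (hα : 0 < α) (i : ℕ) :
    ∑' j : ℕ, ENNReal.ofReal (kmatOffDiag α i.succPNat (j + (i + 1)).succPNat *
      (((j + (i + 1)).succPNat : ℕ+) : ℝ) ^ (-(1/2 : ℝ))) ≤
      ENNReal.ofReal (((i : ℝ) + 1) ^ (-(1/2 : ℝ)) / α) := by
  have hterm : ∀ j : ℕ, kmatOffDiag α i.succPNat (j + (i + 1)).succPNat *
      (((j + (i + 1)).succPNat : ℕ+) : ℝ) ^ (-(1/2 : ℝ)) =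
      ((i : ℝ) + 1) ^ (α - 1/2) * ((j : ℝ) + ((i + 1 : ℕ) : ℝ) + 1) ^ (-(α + 1)) := by
    intro j
    have hgt : i.succPNat < (j + (i + 1)).succPNat := Nat.succPNat_lt_succPNat.2 (by omega)
    rw [kmatOffDiag_of_ne α hgt.ne', kmat_mul_rpow_of_gt α hgt, PNat.cast_succPNat,
      PNat.cast_succPNat]
    push_cast; ring_nf
  simp_rw [hterm, ENNReal.ofReal_mul (by positivity : (0 : ℝ) ≤ ((i : ℝ) + 1) ^ (α - 1/2)),
    ENNReal.tsum_mul_left]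
  grw [tsum_ofReal_rpow_le hα i.succ_pos, ← ENNReal.ofReal_mul (by positivity)]
  refine ENNReal.ofReal_le_ofReal (le_of_eq ?_)
  rw [mul_div_assoc', Nat.cast_succ, ← Real.rpow_add (by positivity)]
  ring_nf

theorem tsum_kmatOffDiag_mul_rpow_le (hα : 0 < α) (n : ℕ+) :
    ∑' m, ENNReal.ofReal (kmatOffDiag α n m) * ENNReal.ofReal ((m : ℝ) ^ (-(1/2 : ℝ))) ≤
      ENNReal.ofReal (2 / α) * ENNReal.ofReal ((n : ℝ) ^ (-(1/2 : ℝ))) := by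
  obtain ⟨i, rfl⟩ : ∃ i : ℕ, n = i.succPNat := ⟨n.natPred, (PNat.succPNat_natPred n).symm⟩
  simp_rw [← ENNReal.ofReal_mul (kmatOffDiag_nonneg _ _ _)]
  rw [← Equiv.pnatEquivNat.symm.tsum_eq, ← ENNReal.summable.sum_add_tsum_nat_add' (k := i + 1),
    sum_range_succ]
  simp only [Equiv.pnatEquivNat_symm_apply, kmatOffDiag_self, zero_mul, ENNReal.ofReal_zero,
    add_zero]
  rw [← ENNReal.ofReal_sum_of_nonneg fun j _ => mul_nonneg (kmatOffDiag_nonneg _ _ _)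
    (by positivity)]
  grw [sum_range_kmatOffDiag_mul_rpow_le hα i, tsum_ofReal_kmatOffDiag_mul_rpow_le hα i,
    ← ENNReal.ofReal_add (by positivity) (by positivity), ← ENNReal.ofReal_mul (by positivity)]
  rw [PNat.cast_succPNat]
  exact ENNReal.ofReal_le_ofReal (by ring_nf; rfl)

theorem le_sum_range_rpow_mul_kmatOffDiag_mul_rpow (hα : 0 < α) (i : ℕ) :
    1 / α * (1 / ((i : ℝ) + 1)) - (((i : ℝ) + 1) ^ (-(α + 1)) / α + ((i : ℝ) + 1) ^ (-(2 : ℝ))) ≤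
      ∑ j ∈ range i, ((i.succPNat : ℕ+) : ℝ) ^ (-(1/2 : ℝ)) *
        kmatOffDiag α i.succPNat j.succPNat * ((j.succPNat : ℕ+) : ℝ) ^ (-(1/2 : ℝ)) := by
  have hi : (0 : ℝ) < i + 1 := by positivity
  have hterm : ∀ j ∈ range i, ((i.succPNat : ℕ+) : ℝ) ^ (-(1/2 : ℝ)) *
      kmatOffDiag α i.succPNat j.succPNat * ((j.succPNat : ℕ+) : ℝ) ^ (-(1/2 : ℝ)) =
      ((i : ℝ) + 1) ^ (-(α + 1)) * ((j : ℝ) + 1) ^ (α - 1) := by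
    intro j hj
    have hlt : j.succPNat < i.succPNat := Nat.succPNat_lt_succPNat.2 (mem_range.1 hj)
    rw [mul_assoc, kmatOffDiag_of_ne α hlt.ne, kmat_mul_rpow_of_lt α hlt, ← mul_assoc,
      PNat.cast_succPNat, PNat.cast_succPNat, ← Real.rpow_add hi]
    ring_nf
  rw [sum_congr rfl hterm, ← mul_sum]
  refine le_trans (le_of_eq ?_) (mul_le_mul_of_nonneg_left (le_sum_range_rpow_sub_one hα i)
    (by positivity))
  have h1 : ((i : ℝ) + 1) ^ (-(α + 1)) * ((i : ℝ) + 1) ^ α = 1 / ((i : ℝ) + 1) := by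
    rw [← Real.rpow_add hi, one_div, ← Real.rpow_neg_one]; ring_nf
  have h2 : ((i : ℝ) + 1) ^ (-(α + 1)) * ((i : ℝ) + 1) ^ (α - 1) =
      ((i : ℝ) + 1) ^ (-(2 : ℝ)) := by
    rw [← Real.rpow_add hi]; ring_nf
  rw [mul_sub, mul_div_assoc' (((i : ℝ) + 1) ^ (-(α + 1))), mul_sub, mul_one, h1, h2]
  ring

theorem exists_forall_le_sum_sum_rpow_mul_kmatOffDiag_mul_rpow (hα : 0 < α) :
    ∃ D, ∀ N, 2 / α * ∑ i ∈ range N, 1 / ((i : ℝ) + 1) - D ≤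
      ∑ i ∈ range N, ∑ j ∈ range N, ((i.succPNat : ℕ+) : ℝ) ^ (-(1/2 : ℝ)) *
        kmatOffDiag α i.succPNat j.succPNat * ((j.succPNat : ℕ+) : ℝ) ^ (-(1/2 : ℝ)) := by
  set e : ℕ → ℝ := fun i => ((i : ℝ) + 1) ^ (-(α + 1)) / α + ((i : ℝ) + 1) ^ (-(2 : ℝ))
  have he : Summable e := by
    have h := fun p (hp : p < -1) => ((summable_nat_add_iff 1).2 (Real.summable_nat_rpow.2 hp)).congr
      fun i : ℕ => by push_cast; rfl
    exact ((h _ (by linarith : -(α + 1) < -1)).div_const α).add (h _ (by norm_num))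
  refine ⟨2 * ∑' i, e i, fun N => ?_⟩
  rw [sum_range_sum_range_eq_two_nsmul _ (fun i j => by rw [kmatOffDiag_comm]; ring)
    (fun i => by simp [kmatOffDiag_self]), nsmul_eq_mul]
  have hrows := sum_le_sum fun i (_ : i ∈ range N) => le_sum_range_rpow_mul_kmatOffDiag_mul_rpow hα i
  rw [sum_sub_distrib, ← mul_sum] at hrows
  change _ - ∑ i ∈ range N, e i ≤ _ at hrows
  have htail : ∑ i ∈ range N, e i ≤ ∑' i, e i := he.sum_le_tsum _ fun i _ => by positivity
  have h2α : 2 / α * ∑ i ∈ range N, 1 / ((i : ℝ) + 1) =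
      2 * (1 / α * ∑ i ∈ range N, 1 / ((i : ℝ) + 1)) := by ring
  push_cast
  linarith

end Kernel

section Operator

variable {α : ℝ} {K Kinf : lp (fun _ : ℕ+ => ℂ) 2 →L[ℂ] lp (fun _ : ℕ+ => ℂ) 2}

theorem summable_kmat_mul (hα : 0 < α) (n : ℕ+) (u : lp (fun _ : ℕ+ => ℂ) 2) :
    Summable fun m => (kmat α n m : ℂ) * u m := by
  have hu := (lp.memℓp u).summable (by norm_num : 0 < (2 : ℝ≥0∞).toReal)
  have hk : Summable fun m : ℕ+ => kmat α n m ^ (2 : ℝ) := by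
    have hs : Summable fun m : ℕ+ => (m : ℝ) ^ (-(2 * α + 1)) :=
      (Real.summable_nat_rpow.2 (by linarith : -(2 * α + 1) < -1)).comp_injective
        PNat.coe_injective
    refine .of_nonneg_of_le (fun m => Real.rpow_nonneg (kmat_nonneg α n m) _) (fun m => ?_)
      (hs.mul_left (((n : ℝ) ^ (α - 1/2)) ^ (2 : ℝ)))
    have hm := m.cast_real_pos
    calc kmat α n m ^ (2 : ℝ) ≤ ((n : ℝ) ^ (α - 1/2) * (m : ℝ) ^ (-(α + 1/2))) ^ (2 : ℝ) := by
          gcongr; exacts [kmat_nonneg α n m, kmat_le hα n m]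
      _ = _ := by
          rw [Real.mul_rpow (by positivity) (by positivity), ← Real.rpow_mul hm.le]
          ring_nf
  refine .of_norm ((Real.summable_mul_of_Lp_Lq_of_nonneg .two_two (kmat_nonneg α n)
    (fun m => norm_nonneg (u m)) hk (by simpa using hu)).congr fun m => ?_)
  rw [norm_mul, Complex.norm_real, Real.norm_of_nonneg (kmat_nonneg α n m)]

theorem sub_apply_eq_tsum (hα : 0 < α) (hK : IsKop α K)
    (hKinf : ∀ u : lp (fun _ : ℕ+ => ℂ) 2, ∀ n : ℕ+, Kinf u n = u n / (n : ℂ))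
    (u : lp (fun _ : ℕ+ => ℂ) 2) (n : ℕ+) :
    (K - Kinf) u n = ∑' m, (kmatOffDiag α n m : ℂ) * u m := by
  rw [sub_apply, lp.coeFn_sub, Pi.sub_apply, hK, hKinf,
    (summable_kmat_mul hα n u).tsum_eq_add_tsum_ite n, kmat_self, div_eq_inv_mul]
  push_cast
  rw [add_sub_cancel_left]
  refine tsum_congr fun m => ?_
  unfold kmatOffDiag
  split_ifs <;> simp

theorem norm_sub_apply_le (hα : 0 < α) (hK : IsKop α K)
    (hKinf : ∀ u : lp (fun _ : ℕ+ => ℂ) 2, ∀ n : ℕ+, Kinf u n = u n / (n : ℂ))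
    (u : lp (fun _ : ℕ+ => ℂ) 2) :
    ‖(K - Kinf) u‖ ≤ 2 / α * ‖u‖ := by
  refine lp.norm_le_of_schur (fun n m => ENNReal.ofReal (kmatOffDiag α n m))
    (fun m => ENNReal.ofReal ((m : ℝ) ^ (-(1/2 : ℝ)))) (by positivity)
    (fun m => (ENNReal.ofReal_pos.2 (Real.rpow_pos_of_pos m.cast_real_pos _)).ne')
    (fun m => ENNReal.ofReal_ne_top) (fun n m => by rw [kmatOffDiag_comm])
    (tsum_kmatOffDiag_mul_rpow_le hα) fun n => ?_
  rw [sub_apply_eq_tsum hα hK hKinf]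
  refine enorm_tsum_le_tsum_enorm.trans_eq (tsum_congr fun m => ?_)
  rw [enorm_mul, ← ofReal_norm, Complex.norm_real, Real.norm_of_nonneg (kmatOffDiag_nonneg _ _ _)]

theorem sub_apply_single (hα : 0 < α) (hK : IsKop α K)
    (hKinf : ∀ u : lp (fun _ : ℕ+ => ℂ) 2, ∀ n : ℕ+, Kinf u n = u n / (n : ℂ)) (n m : ℕ+) :
    (K - Kinf) (lp.single 2 m 1) n = kmatOffDiag α n m := by
  rw [sub_apply_eq_tsum hα hK hKinf, tsum_eq_single m fun k hk => by simp [hk]]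
  simp

theorem exists_forall_mul_sub_le_opNorm_mul (hα : 0 < α) (hK : IsKop α K)
    (hKinf : ∀ u : lp (fun _ : ℕ+ => ℂ) 2, ∀ n : ℕ+, Kinf u n = u n / (n : ℂ)) :
    ∃ D, ∀ N, 2 / α * ∑ i ∈ range N, 1 / ((i : ℝ) + 1) - D ≤
      ‖K - Kinf‖ * ∑ i ∈ range N, 1 / ((i : ℝ) + 1) := by
  obtain ⟨D, hD⟩ := exists_forall_le_sum_sum_rpow_mul_kmatOffDiag_mul_rpow hα
  refine ⟨D, fun N => (hD N).trans ?_⟩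
  have hQ := lp.sum_sum_mul_le_opNorm_mul (K - Kinf) (kmatOffDiag α) (sub_apply_single hα hK hKinf)
    ((range N).map Equiv.pnatEquivNat.symm.toEmbedding) fun m => (m : ℝ) ^ (-(1/2 : ℝ))
  have hsq : ∀ i : ℕ, (((i.succPNat : ℕ+) : ℝ) ^ (-(1/2 : ℝ))) ^ 2 = 1 / ((i : ℝ) + 1) := by
    intro i
    rw [PNat.cast_succPNat, ← Real.rpow_natCast, ← Real.rpow_mul (by positivity)]
    norm_num [Real.rpow_neg_one]
  simpa only [sum_map, Equiv.coe_toEmbedding, Equiv.pnatEquivNat_symm_apply, hsq] using hQ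

end Operator

/-- The operator norm of `K_α - K_∞` equals `2/α`, where `K_∞` is the diagonal operator
with entries `1/n`. -/
theorem norm_Kalpha_sub_diag (α : ℝ) (hα : 0 < α)
    (K Kinf : lp (fun _ : ℕ+ => ℂ) 2 →L[ℂ] lp (fun _ : ℕ+ => ℂ) 2)
    (hK : IsKop α K) (hKinf : ∀ u : lp (fun _ : ℕ+ => ℂ) 2, ∀ n : ℕ+,
      Kinf u n = u n / (n : ℂ)) :
    ‖K - Kinf‖ = 2 / α := by
  refine le_antisymm
    (ContinuousLinearMap.opNorm_le_bound _ (by positivity) (norm_sub_apply_le hα hK hKinf)) ?_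
  obtain ⟨D, hD⟩ := exists_forall_mul_sub_le_opNorm_mul hα hK hKinf
  exact Real.tendsto_sum_range_one_div_nat_succ_atTop.le_of_forall_mul_sub_le_mul hD
end

section
/- If α, β > 0 and 1 ≤ α − β ≤ 2, then for every positive integer n, n^(−(α−β)) ∑_{m=1}^n m^(α−β−1) + n^(α+β) ∑_{m=n+1}^∞ m^(−α−β−1) ≤ 1/(α−β) + 1/(α+β) + α/(6n²) − n^(−(α−β))/12. -/
/-!
Write `F_a(x) = x^a/a + x^(a-1)/2 + (a-1) x^(a-2)/12` (`emApprox`) for the Euler–Maclaurin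
approximation of `∑ m^(a-1)`. The error of one step, `F_a(x+1) - F_a(x) - (x+1)^(a-1)`, equals
`x^a·R_a(1/x)` for an explicit function `R_a` (`emRemainder`) vanishing to third order at `0`, whose
third derivative is `(a-1)(a-2)(a-3)(a-4)t²(1+t)^(a-5)/12`. For `a < 0` this is nonnegative, so the
steps telescope to `∑_{m>n} m^(a-1) ≤ -F_a(n)`; for `1 ≤ a ≤ 2` it is at least `-(a-1)(2-a)t²/2`, so
the steps telescope to `∑_{m≤n} m^(a-1) ≤ F_a(n) - 1/12` once the summable error `x^(a-5)` is
absorbed by the slack at `n = 1`. Multiplying by `n^(-(α-β))` resp. `n^(α+β)` with `a = α-β` resp.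
`a = -(α+β)`, the `1/(2n)` terms cancel and the `1/n²` terms add up to `α/(6n²)`.
-/

namespace EulerMaclaurin

lemma nonneg_of_hasDerivAt_nonneg {f f' : ℝ → ℝ} (hf : ∀ t, 0 ≤ t → HasDerivAt f (f' t) t)
    (hf' : ∀ t, 0 ≤ t → 0 ≤ f' t) (h₀ : f 0 = 0) {t : ℝ} (ht : 0 ≤ t) : 0 ≤ f t := by
  have hmono : MonotoneOn f (Set.Ici 0) := by
    refine monotoneOn_of_hasDerivWithinAt_nonneg (convex_Ici 0)
      (fun x hx => (hf x hx).continuousAt.continuousWithinAt)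
      (fun x hx => (hf x (interior_subset hx)).hasDerivWithinAt)
      (fun x hx => hf' x (interior_subset hx))
  simpa [h₀] using hmono Set.self_mem_Ici ht ht

lemma nonneg_of_hasDerivAt_third_nonneg {f f₁ f₂ f₃ : ℝ → ℝ}
    (hf : ∀ t, 0 ≤ t → HasDerivAt f (f₁ t) t) (hf₁ : ∀ t, 0 ≤ t → HasDerivAt f₁ (f₂ t) t)
    (hf₂ : ∀ t, 0 ≤ t → HasDerivAt f₂ (f₃ t) t) (hf₃ : ∀ t, 0 ≤ t → 0 ≤ f₃ t)
    (h₀ : f 0 = 0) (h₁ : f₁ 0 = 0) (h₂ : f₂ 0 = 0) {t : ℝ} (ht : 0 ≤ t) : 0 ≤ f t :=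
  nonneg_of_hasDerivAt_nonneg hf
    (fun _ hs => nonneg_of_hasDerivAt_nonneg hf₁
      (fun _ hr => nonneg_of_hasDerivAt_nonneg hf₂ hf₃ h₂ hr) h₁ hs) h₀ ht

lemma hasDerivAt_one_add_rpow (p : ℝ) {t : ℝ} (ht : 0 ≤ t) :
    HasDerivAt (fun s : ℝ => (1 + s) ^ p) (p * (1 + t) ^ (p - 1)) t := by
  simpa using ((hasDerivAt_id t).const_add 1).rpow_const (p := p) (Or.inl (by positivity))

noncomputable def emApprox (a x : ℝ) : ℝ :=
  x ^ a / a + x ^ (a - 1) / 2 + (a - 1) * x ^ (a - 2) / 12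

noncomputable def emRemainder (a t : ℝ) : ℝ :=
  ((1 + t) ^ a - 1) / a - t / 2 * ((1 + t) ^ (a - 1) + 1)
    + (a - 1) * t ^ 2 / 12 * ((1 + t) ^ (a - 2) - 1)

noncomputable def emRemainderDeriv (a t : ℝ) : ℝ :=
  (1 + t) ^ (a - 1) / 2 - 1 / 2 - (a - 1) * t / 6 - (a - 1) * t * (1 + t) ^ (a - 2) / 3
    + (a - 1) * (a - 2) * t ^ 2 * (1 + t) ^ (a - 3) / 12

noncomputable def emRemainderDeriv2 (a t : ℝ) : ℝ :=
  (a - 1) * (((1 + t) ^ (a - 2) - 1) / 6 - (a - 2) * t * (1 + t) ^ (a - 3) / 6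
    + (a - 2) * (a - 3) * t ^ 2 * (1 + t) ^ (a - 4) / 12)

noncomputable def emRemainderDeriv3 (a t : ℝ) : ℝ :=
  (a - 1) * (a - 2) * (a - 3) * (a - 4) * t ^ 2 * (1 + t) ^ (a - 5) / 12

lemma hasDerivAt_emRemainder {a t : ℝ} (ha : a ≠ 0) (ht : 0 ≤ t) :
    HasDerivAt (emRemainder a) (emRemainderDeriv a t) t := by
  have h₀ := hasDerivAt_one_add_rpow a ht
  have h₁ := hasDerivAt_one_add_rpow (a - 1) ht
  have h₂ := hasDerivAt_one_add_rpow (a - 2) ht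
  have H := (((h₀.sub_const 1).div_const a).sub
      (((hasDerivAt_id t).div_const 2).mul (h₁.add_const 1))).add
      ((((hasDerivAt_id t).pow 2).const_mul (a - 1) |>.div_const 12).mul (h₂.sub_const 1))
  refine H.congr_deriv ?_
  simp only [id_eq, Pi.pow_apply, emRemainderDeriv]
  field_simp
  ring_nf

lemma hasDerivAt_emRemainderDeriv (a : ℝ) {t : ℝ} (ht : 0 ≤ t) :
    HasDerivAt (emRemainderDeriv a) (emRemainderDeriv2 a t) t := by
  have h₁ := hasDerivAt_one_add_rpow (a - 1) ht
  have h₂ := hasDerivAt_one_add_rpow (a - 2) ht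
  have h₃ := hasDerivAt_one_add_rpow (a - 3) ht
  have H := ((((h₁.div_const 2).sub_const (1 / 2)).sub
      (((hasDerivAt_id t).const_mul (a - 1)).div_const 6)).sub
      ((((hasDerivAt_id t).const_mul (a - 1)).mul h₂).div_const 3)).add
      ((((hasDerivAt_id t).pow 2).const_mul ((a - 1) * (a - 2))).mul h₃ |>.div_const 12)
  refine H.congr_deriv ?_
  simp only [id_eq, Pi.pow_apply, emRemainderDeriv2]
  ring_nf

lemma hasDerivAt_emRemainderDeriv2 (a : ℝ) {t : ℝ} (ht : 0 ≤ t) :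
    HasDerivAt (emRemainderDeriv2 a) (emRemainderDeriv3 a t) t := by
  have h₂ := hasDerivAt_one_add_rpow (a - 2) ht
  have h₃ := hasDerivAt_one_add_rpow (a - 3) ht
  have h₄ := hasDerivAt_one_add_rpow (a - 4) ht
  have H := ((((h₂.sub_const 1).div_const 6).sub
      (((hasDerivAt_id t).const_mul (a - 2)).mul h₃ |>.div_const 6)).add
      ((((hasDerivAt_id t).pow 2).const_mul ((a - 2) * (a - 3))).mul h₄ |>.div_const 12)).const_mul
      (a - 1)
  refine H.congr_deriv ?_
  simp only [id_eq, Pi.pow_apply, emRemainderDeriv3]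
  ring_nf

lemma emRemainder_add_nonneg {a c t : ℝ} (ha : a ≠ 0)
    (h : ∀ s, 0 ≤ s → 0 ≤ emRemainderDeriv3 a s + c * s ^ 2 / 2) (ht : 0 ≤ t) :
    0 ≤ emRemainder a t + c * t ^ 5 / 120 := by
  refine nonneg_of_hasDerivAt_third_nonneg (f := fun s => emRemainder a s + c * s ^ 5 / 120)
    (f₁ := fun s => emRemainderDeriv a s + c * s ^ 4 / 24)
    (f₂ := fun s => emRemainderDeriv2 a s + c * s ^ 3 / 6)
    (f₃ := fun s => emRemainderDeriv3 a s + c * s ^ 2 / 2) (fun s hs => ?_) (fun s hs => ?_)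
    (fun s hs => ?_) h (by simp [emRemainder]) (by simp [emRemainderDeriv])
    (by simp [emRemainderDeriv2]) ht
  · exact ((hasDerivAt_emRemainder ha hs).add
      (((hasDerivAt_pow 5 s).const_mul c).div_const 120)).congr_deriv (by push_cast; ring)
  · exact ((hasDerivAt_emRemainderDeriv a hs).add
      (((hasDerivAt_pow 4 s).const_mul c).div_const 24)).congr_deriv (by push_cast; ring)
  · exact ((hasDerivAt_emRemainderDeriv2 a hs).add
      (((hasDerivAt_pow 3 s).const_mul c).div_const 6)).congr_deriv (by push_cast; ring)

lemma emRemainder_nonneg_of_neg {a t : ℝ} (ha : a < 0) (ht : 0 ≤ t) : 0 ≤ emRemainder a t := by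
  simpa using emRemainder_add_nonneg (c := 0) ha.ne (fun s hs => by
    have : 0 ≤ (a - 1) * (a - 2) * (a - 3) * (a - 4) := by
      nlinarith [mul_pos (by linarith : (0 : ℝ) < 1 - a) (by linarith : (0 : ℝ) < 2 - a),
        mul_pos (by linarith : (0 : ℝ) < 3 - a) (by linarith : (0 : ℝ) < 4 - a)]
    simp only [emRemainderDeriv3, zero_mul, zero_div, add_zero]
    positivity) ht

lemma emRemainder_add_nonneg_of_mem_Icc {a t : ℝ} (ha₁ : 1 ≤ a) (ha₂ : a ≤ 2) (ht : 0 ≤ t) :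
    0 ≤ emRemainder a t + (a - 1) * (2 - a) * t ^ 5 / 120 := by
  refine emRemainder_add_nonneg (by linarith) (fun s hs => ?_) ht
  have hpow : (1 + s) ^ (a - 5) ≤ 1 :=
    Real.rpow_le_one_of_one_le_of_nonpos (by linarith) (by linarith)
  have hfac : (3 - a) * (4 - a) * (1 + s) ^ (a - 5) ≤ 6 := by
    nlinarith [mul_le_mul_of_nonneg_left hpow (by nlinarith : (0 : ℝ) ≤ (3 - a) * (4 - a))]
  have : 0 ≤ (a - 1) * (2 - a) * s ^ 2 * (6 - (3 - a) * (4 - a) * (1 + s) ^ (a - 5)) := by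
    have : 0 ≤ (a - 1) * (2 - a) := mul_nonneg (by linarith) (by linarith)
    have : 0 ≤ 6 - (3 - a) * (4 - a) * (1 + s) ^ (a - 5) := by linarith
    positivity
  unfold emRemainderDeriv3
  linear_combination this / 12

lemma rpow_sub_one_eq_mul_inv {x : ℝ} (hx : 0 < x) (a : ℝ) : x ^ (a - 1) = x ^ a * x⁻¹ := by
  rw [Real.rpow_sub_one hx.ne', div_eq_mul_inv]

lemma rpow_sub_two_eq_mul_inv_sq {x : ℝ} (hx : 0 < x) (a : ℝ) :
    x ^ (a - 2) = x ^ a * x⁻¹ ^ 2 := by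
  rw [show a - 2 = a - ((2 : ℕ) : ℝ) by norm_num, Real.rpow_sub_natCast hx.ne', div_eq_mul_inv,
    inv_pow]

lemma emApprox_add_one_sub (a : ℝ) {x : ℝ} (hx : 0 < x) :
    emApprox a (x + 1) - emApprox a x - (x + 1) ^ (a - 1) = x ^ a * emRemainder a x⁻¹ := by
  have hsucc (p : ℝ) : (x + 1) ^ p = x ^ p * (1 + x⁻¹) ^ p := by
    rw [← Real.mul_rpow hx.le (by positivity), mul_add, mul_inv_cancel₀ hx.ne', mul_one]
  simp only [emApprox, emRemainder, hsucc, rpow_sub_one_eq_mul_inv hx,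
    rpow_sub_two_eq_mul_inv_sq hx]
  ring

lemma rpow_neg_mul_emApprox (a : ℝ) {x : ℝ} (hx : 0 < x) :
    x ^ (-a) * emApprox a x = 1 / a + x⁻¹ / 2 + (a - 1) * x⁻¹ ^ 2 / 12 := by
  have : x ^ (-a) * x ^ a = 1 := by rw [← Real.rpow_add hx, neg_add_cancel, Real.rpow_zero]
  simp only [emApprox, rpow_sub_one_eq_mul_inv hx, rpow_sub_two_eq_mul_inv_sq hx]
  linear_combination (1 / a + x⁻¹ / 2 + (a - 1) * x⁻¹ ^ 2 / 12) * this

lemma emApprox_nonpos_of_neg {a x : ℝ} (ha : a < 0) (hx : 0 < x) : emApprox a x ≤ 0 := by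
  have hquad : 0 ≤ 12 + 6 * a * x⁻¹ + a * (a - 1) * x⁻¹ ^ 2 := by
    nlinarith [sq_nonneg (a * x⁻¹ + 3), mul_nonneg (neg_nonneg.2 ha.le) (sq_nonneg x⁻¹)]
  have : x ^ (-a) * emApprox a x ≤ 0 := by
    rw [rpow_neg_mul_emApprox a hx, show 1 / a + x⁻¹ / 2 + (a - 1) * x⁻¹ ^ 2 / 12
      = (12 + 6 * a * x⁻¹ + a * (a - 1) * x⁻¹ ^ 2) / (12 * a) by field_simp [ha.ne]; ring]
    exact div_nonpos_of_nonneg_of_nonpos hquad (by linarith)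
  exact nonpos_of_mul_nonpos_right this (by positivity)

lemma rpow_le_emApprox_add_one_sub_of_neg {a x : ℝ} (ha : a < 0) (hx : 0 < x) :
    (x + 1) ^ (a - 1) ≤ emApprox a (x + 1) - emApprox a x := by
  have := emApprox_add_one_sub a hx
  have : 0 ≤ x ^ a * emRemainder a x⁻¹ :=
    mul_nonneg (by positivity) (emRemainder_nonneg_of_neg ha (by positivity))
  linarith

lemma rpow_le_emApprox_add_one_sub {a x : ℝ} (ha₁ : 1 ≤ a) (ha₂ : a ≤ 2) (hx : 0 < x) :
    (x + 1) ^ (a - 1)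
      ≤ emApprox a (x + 1) - emApprox a x + (a - 1) * (2 - a) * x ^ (a - 5) / 120 := by
  have := emApprox_add_one_sub a hx
  have hx5 : x ^ (a - 5) = x ^ a * x⁻¹ ^ 5 := by
    rw [show a - 5 = a - ((5 : ℕ) : ℝ) by norm_num, Real.rpow_sub_natCast hx.ne', div_eq_mul_inv,
      inv_pow]
  have : 0 ≤ x ^ a * (emRemainder a x⁻¹ + (a - 1) * (2 - a) * x⁻¹ ^ 5 / 120) :=
    mul_nonneg (by positivity) (emRemainder_add_nonneg_of_mem_Icc ha₁ ha₂ (by positivity))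
  rw [hx5]
  linarith

lemma rpow_sub_five_div_le {a x : ℝ} (ha : a ≤ 2) (hx : 1 ≤ x) :
    x ^ (a - 5) / 120 ≤ (1 / x - 1 / (x + 1)) / 30 := by
  have hx0 : 0 < x := by linarith
  have h₁ : x ^ (a - 5) ≤ x ^ (-3 : ℝ) := Real.rpow_le_rpow_of_exponent_le hx (by linarith)
  have h₂ : x ^ (-3 : ℝ) = 1 / x ^ 3 := by
    rw [Real.rpow_neg hx0.le, one_div]; norm_cast
  have h₃ : 1 / x ^ 3 / 120 ≤ (1 / x - 1 / (x + 1)) / 30 := by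
    rw [show 1 / x - 1 / (x + 1) = 1 / (x * (x + 1)) by field_simp; ring, div_div, div_div,
      div_le_div_iff₀ (by positivity) (by positivity)]
    nlinarith [mul_le_mul_of_nonneg_left hx (by positivity : (0 : ℝ) ≤ x)]
  linarith

lemma sum_Icc_rpow_add_le {a : ℝ} (ha₁ : 1 ≤ a) (ha₂ : a ≤ 2) {n : ℕ} (hn : 1 ≤ n) :
    ∑ m ∈ Finset.Icc 1 n, (m : ℝ) ^ (a - 1) + (a - 1) * (2 - a) / (30 * n)
      ≤ emApprox a n - 1 / 12 := by
  induction n, hn using Nat.le_induction with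
  | base =>
    have : (a - 1) * (2 - a) / 30 ≤ (2 - a) * (6 - a) / (12 * a) := by
      rw [div_le_div_iff₀ (by norm_num) (by linarith)]
      nlinarith [mul_nonneg (by linarith : (0 : ℝ) ≤ 2 - a) (by linarith : (0 : ℝ) ≤ a - 1)]
    simp only [Finset.Icc_self, Finset.sum_singleton, Nat.cast_one, Real.one_rpow, emApprox]
    have : (2 - a) * (6 - a) / (12 * a) = 1 / a + 1 / 2 + (a - 1) / 12 - 1 - 1 / 12 := by
      field_simp; ring
    linarith
  | succ n hn ih =>
    have hx : (1 : ℝ) ≤ n := by exact_mod_cast hn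
    have hstep := rpow_le_emApprox_add_one_sub ha₁ ha₂ (by linarith : (0 : ℝ) < n)
    have herr := mul_le_mul_of_nonneg_left (rpow_sub_five_div_le ha₂ hx)
      (mul_nonneg (by linarith : (0 : ℝ) ≤ a - 1) (by linarith : (0 : ℝ) ≤ 2 - a))
    rw [Finset.sum_Icc_succ_top (by omega), Nat.cast_succ]
    have : (a - 1) * (2 - a) / (30 * n) - (a - 1) * (2 - a) / (30 * (n + 1))
        = (a - 1) * (2 - a) * ((1 / n - 1 / (n + 1)) / 30) := by field_simp
    linarith

lemma tsum_rpow_le_neg_emApprox {a : ℝ} (ha : a < 0) {n : ℕ} (hn : 0 < n) :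
    ∑' m : ℕ, ((m + n + 1 : ℕ) : ℝ) ^ (a - 1) ≤ -emApprox a n := by
  have hn' : (0 : ℝ) < n := by exact_mod_cast hn
  refine Real.tsum_le_of_sum_range_le (fun _ => by positivity) fun K => ?_
  calc ∑ m ∈ Finset.range K, ((m + n + 1 : ℕ) : ℝ) ^ (a - 1)
      ≤ ∑ m ∈ Finset.range K,
          (emApprox a ((n + (m + 1) : ℕ) : ℝ) - emApprox a ((n + m : ℕ) : ℝ)) := by
        refine Finset.sum_le_sum fun m _ => ?_
        have := rpow_le_emApprox_add_one_sub_of_neg ha (by positivity : (0 : ℝ) < n + m)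
        rwa [show ((m + n + 1 : ℕ) : ℝ) = n + m + 1 by push_cast; ring,
          show ((n + (m + 1) : ℕ) : ℝ) = n + m + 1 by push_cast; ring, Nat.cast_add]
    _ = emApprox a ((n + K : ℕ) : ℝ) - emApprox a n := by
        rw [Finset.sum_range_sub (fun m => emApprox a ((n + m : ℕ) : ℝ))]; simp
    _ ≤ -emApprox a n := by
        linarith [emApprox_nonpos_of_neg ha (by positivity : (0 : ℝ) < ((n + K : ℕ) : ℝ))]

end EulerMaclaurin

open EulerMaclaurin

/-- Euler–Maclaurin type estimate: for `α, β > 0` with `1 ≤ α - β ≤ 2` and every `n ≥ 1`,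
`n^(-(α-β)) ∑_{m=1}^n m^(α-β-1) + n^(α+β) ∑_{m=n+1}^∞ m^(-α-β-1)
  ≤ 1/(α-β) + 1/(α+β) + α/(6n²) - n^(-(α-β))/12`. -/
theorem euler_maclaurin_estimate (α β : ℝ) (hα : 0 < α) (hβ : 0 < β)
    (h1 : 1 ≤ α - β) (h2 : α - β ≤ 2) (n : ℕ) (hn : 0 < n) :
    (n : ℝ) ^ (-(α - β)) * ∑ m ∈ Finset.Icc 1 n, (m : ℝ) ^ (α - β - 1)
      + (n : ℝ) ^ (α + β) * ∑' m : ℕ, ((m + n + 1 : ℕ) : ℝ) ^ (-α - β - 1)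
    ≤ 1 / (α - β) + 1 / (α + β) + α / (6 * (n : ℝ) ^ 2)
        - (n : ℝ) ^ (-(α - β)) / 12 := by
  have hn' : (0 : ℝ) < n := by exact_mod_cast hn
  have hsum : ∑ m ∈ Finset.Icc 1 n, (m : ℝ) ^ (α - β - 1) ≤ emApprox (α - β) n - 1 / 12 := by
    have := sum_Icc_rpow_add_le h1 h2 hn
    have : 0 ≤ (α - β - 1) * (2 - (α - β)) / (30 * n) := by
      have : 0 ≤ (α - β - 1) * (2 - (α - β)) := mul_nonneg (by linarith) (by linarith)
      positivity
    linarith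
  have htail : ∑' m : ℕ, ((m + n + 1 : ℕ) : ℝ) ^ (-α - β - 1) ≤ -emApprox (-(α + β)) n := by
    simpa only [neg_add, ← sub_eq_add_neg] using
      tsum_rpow_le_neg_emApprox (a := -(α + β)) (by linarith) hn
  calc _ ≤ (n : ℝ) ^ (-(α - β)) * (emApprox (α - β) n - 1 / 12)
        + (n : ℝ) ^ (-(-(α + β))) * -emApprox (-(α + β)) n := by
        rw [neg_neg]
        gcongr
    _ = _ := by
        rw [mul_sub, mul_neg, rpow_neg_mul_emApprox _ hn', rpow_neg_mul_emApprox _ hn']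
        field_simp
        ring
end
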